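/- arXiv:math/9906187 — 7 statements merged into one kernel-verified Lean document; each statement's English description precedes it below -/
import Mathlib

section
/- If G is a connected graph and f : V(G) → {1,2} is a map with f(v₀) = 1 for some vertex v₀, then G admits an f-list assignment L using exactly χ(G) colors in total such that G has a unique proper L-coloring. -/
open SimpleGraph Finset

variable {V : Type*}

/-- `c` is a proper list coloring of `G` from lists `L`. -/
def IsLC (G : SimpleGraph V) (L : V → Finset ℕ) (c : V → ℕ) : Prop :=
  (∀ v, c v ∈ L v) ∧ ∀ ⦃u w⦄, G.Adj u w → c u ≠ c w

/-- `G` is uniquely `(f,t)`-list colorable. -/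
def UniqFT (G : SimpleGraph V) [Fintype V] (f : V → ℕ) (t : ℕ) : Prop :=
  ∃ L : V → Finset ℕ, (∀ v, (L v).card = f v) ∧
    (Finset.univ.biUnion L).card = t ∧ ∃! c, IsLC G L c

/-- `G` is uniquely `(k,t)`-list colorable. -/
def UniqKT (G : SimpleGraph V) [Fintype V] (k t : ℕ) : Prop :=
  UniqFT G (fun _ => k) t

/-- `G` is uniquely `k`-list colorable (no restriction on total number of colors). -/
def UniqK (G : SimpleGraph V) (k : ℕ) : Prop :=
  ∃ L : V → Finset ℕ, (∀ v, (L v).card = k) ∧ ∃! c, IsLC G L c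

/-- The chromatic number as a natural number. -/
noncomputable def chrom (G : SimpleGraph V) : ℕ := sInf {n | G.Colorable n}

/-- A graph has no cut vertex: deleting any single vertex leaves it connected. -/
def NoCutVtx {W : Type*} (H : SimpleGraph W) : Prop :=
  ∀ w : W, ((⊤ : H.Subgraph).deleteVerts {w}).coe.Connected

/-- `G` is 2-connected: at least 3 vertices and no cut vertex. -/
def TwoConn (G : SimpleGraph V) [Fintype V] : Prop :=
  3 ≤ Fintype.card V ∧ G.Connected ∧ NoCutVtx G

/-- `B` is (the vertex set of) a block of `G`: a maximal set inducing a
connected subgraph with no cut vertex. -/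
def IsBlock (G : SimpleGraph V) (B : Finset V) : Prop :=
  (G.induce (↑B : Set V)).Connected ∧ NoCutVtx (G.induce (↑B : Set V)) ∧
    ∀ B' : Finset V, B ⊆ B' → (G.induce (↑B' : Set V)).Connected →
      NoCutVtx (G.induce (↑B' : Set V)) → B' = B

/-- `H` is a theta graph `θ_{p,q,r}`: three internally disjoint paths of
lengths `p`, `q`, `r` between two common endpoints, covering all vertices
and edges of `H`. -/
def IsTheta {W : Type*} (H : SimpleGraph W) (p q r : ℕ) : Prop :=
  ∃ (u v : W) (P₁ P₂ P₃ : H.Walk u v),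
    u ≠ v ∧ P₁.IsPath ∧ P₂.IsPath ∧ P₃.IsPath ∧
    P₁.length = p ∧ P₂.length = q ∧ P₃.length = r ∧
    (∀ x, x ∈ P₁.support → x ∈ P₂.support → x = u ∨ x = v) ∧
    (∀ x, x ∈ P₁.support → x ∈ P₃.support → x = u ∨ x = v) ∧
    (∀ x, x ∈ P₂.support → x ∈ P₃.support → x = u ∨ x = v) ∧
    (∀ x, x ∈ P₁.support ∨ x ∈ P₂.support ∨ x ∈ P₃.support) ∧
    (∀ e ∈ H.edgeSet, e ∈ P₁.edges ∨ e ∈ P₂.edges ∨ e ∈ P₃.edges)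

/-- `χ_u(G,k)`: the least `t` such that `G` is uniquely `(k,t)`-list colorable
(`0` if there is none, by convention of `sInf` on `ℕ`). -/
noncomputable def chiU (G : SimpleGraph V) [Fintype V] (k : ℕ) : ℕ :=
  sInf {t | UniqKT G k t}

lemma exists_parent (G : SimpleGraph V) (hconn : G.Connected) (v₀ v : V) (hv : v ≠ v₀) :
    ∃ u, G.Adj u v ∧ G.dist v₀ u + 1 = G.dist v₀ v := by
  obtain ⟨p, hp⟩ := hconn.exists_walk_length_eq_dist v v₀
  cases p with
  | nil => exact absurd rfl hv
  | cons h q =>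
    rename_i u
    refine ⟨u, h.symm, ?_⟩
    simp only [SimpleGraph.Walk.length_cons] at hp
    have h1 : G.dist v₀ u ≤ q.length := by
      rw [SimpleGraph.dist_comm]; exact SimpleGraph.dist_le q
    have h2 : G.dist v₀ v ≤ G.dist v₀ u + 1 := by
      calc G.dist v₀ v ≤ G.dist v₀ u + G.dist u v := hconn.dist_triangle
        _ ≤ G.dist v₀ u + 1 := by
            gcongr; exact (SimpleGraph.dist_le h.symm.toWalk).trans (by simp)
    have h3 : G.dist v v₀ = G.dist v₀ v := SimpleGraph.dist_comm
    omega

/-- If `G` is connected and `f : V → {1,2}` with `f v₀ = 1` for some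
vertex `v₀`, then `G` is uniquely `(f, χ(G))`-list colorable. -/
theorem stmt0 [Fintype V] (G : SimpleGraph V) (hconn : G.Connected)
    (f : V → ℕ) (hf : ∀ v, f v = 1 ∨ f v = 2) (v₀ : V) (h₀ : f v₀ = 1) :
    UniqFT G f (chrom G) := by
  classical
  set n := chrom G with hn
  have hcol : G.Colorable n := by
    have : (Fintype.card V) ∈ {n | G.Colorable n} :=
      (SimpleGraph.Coloring.mk id fun h => h.ne).colorable
    exact Nat.sInf_mem ⟨_, this⟩
  obtain ⟨C⟩ := hcol
  set c0 : V → ℕ := fun v => (C v : ℕ) with hc0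
  have hc0p : ∀ ⦃u w⦄, G.Adj u w → c0 u ≠ c0 w := fun u w h => by
    simpa [hc0, Fin.val_eq_val] using C.valid h
  -- parent function
  have hpar : ∀ v, v ≠ v₀ → ∃ u, G.Adj u v ∧ G.dist v₀ u + 1 = G.dist v₀ v :=
    fun v hv => exists_parent G hconn v₀ v hv
  choose par hpadj hpdist using hpar
  set L : V → Finset ℕ := fun v =>
    if h : f v = 1 ∨ v = v₀ then {c0 v} else {c0 v, c0 (par v (by tauto))} with hL
  refine ⟨L, ?_, ?_, ?_⟩
  · intro v
    by_cases h : f v = 1 ∨ v = v₀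
    · have hf1 : f v = 1 := by
        rcases h with h | h
        · exact h
        · rw [h]; exact h₀
      simp [hL, h, hf1]
    · have hf2 : f v = 2 := (hf v).resolve_left (by tauto)
      have hne : v ≠ v₀ := by tauto
      simp only [hL, dif_neg h]
      rw [Finset.card_insert_of_notMem (by simpa using (hc0p (hpadj v hne)).symm),
        Finset.card_singleton, hf2]
  · -- total colors
    have himg : Finset.univ.biUnion L = Finset.univ.image c0 := by
      apply Finset.Subset.antisymm
      · intro x hx
        simp only [Finset.mem_biUnion, Finset.mem_univ, true_and] at hx
        obtain ⟨v, hv⟩ := hx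
        by_cases h : f v = 1 ∨ v = v₀
        · simp only [hL, dif_pos h, Finset.mem_singleton] at hv
          simp [hv]
        · simp only [hL, dif_neg h, Finset.mem_insert, Finset.mem_singleton] at hv
          simp only [Finset.mem_image, Finset.mem_univ, true_and]
          rcases hv with h1 | h2
          · exact ⟨v, h1.symm⟩
          · exact ⟨_, h2.symm⟩
      · intro x hx
        simp only [Finset.mem_image, Finset.mem_univ, true_and] at hx
        obtain ⟨v, hv⟩ := hx
        simp only [Finset.mem_biUnion, Finset.mem_univ, true_and]
        refine ⟨v, ?_⟩
        by_cases h : f v = 1 ∨ v = v₀ <;> simp [hL, h, hv]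
    rw [himg]
    have hle : (Finset.univ.image c0).card ≤ n := by
      have : Finset.univ.image c0 ⊆ Finset.range n := by
        intro x hx
        simp only [Finset.mem_image, Finset.mem_univ, true_and] at hx
        obtain ⟨v, hv⟩ := hx
        simp only [Finset.mem_range, ← hv, hc0]
        exact (C v).isLt
      exact (Finset.card_le_card this).trans (by simp)
    have hge : n ≤ (Finset.univ.image c0).card := by
      apply Nat.sInf_le
      haveI : Fintype {x // x ∈ Finset.univ.image c0} := FinsetCoe.fintype _
      have hC2 : G.Colorable (Fintype.card {x // x ∈ Finset.univ.image c0}) := by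
        refine (SimpleGraph.Coloring.mk
          (fun v => (⟨c0 v, Finset.mem_image_of_mem c0 (Finset.mem_univ v)⟩ :
            {x // x ∈ Finset.univ.image c0}))
          (fun h hc => hc0p h (congrArg Subtype.val hc))).colorable
      rwa [Fintype.card_coe] at hC2
    omega
  · -- unique coloring
    have hmem : ∀ v, c0 v ∈ L v := by
      intro v
      by_cases h : f v = 1 ∨ v = v₀ <;> simp [hL, h]
    have huniq : ∀ c, IsLC G L c → c = c0 := by
      intro c ⟨hcm, hcp⟩
      funext v
      have key : ∀ d, ∀ v, G.dist v₀ v ≤ d → c v = c0 v := by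
        intro d
        induction d with
        | zero =>
          intro v hv
          have hv0 : v = v₀ := ((hconn.dist_eq_zero_iff).mp (Nat.le_zero.mp hv)).symm
          subst hv0
          have := hcm v
          simp [hL, dif_pos (Or.inr rfl)] at this
          exact this
        | succ d ih =>
          intro v hv
          by_cases h : f v = 1 ∨ v = v₀
          · have := hcm v
            simp [hL, dif_pos h] at this; exact this
          · have hne : v ≠ v₀ := by tauto
            have hd : G.dist v₀ (par v hne) + 1 = G.dist v₀ v := hpdist v hne
            have hple : G.dist v₀ (par v hne) ≤ d := by omega
            have hpc : c (par v hne) = c0 (par v hne) := ih _ hple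
            have := hcm v
            simp only [hL, dif_neg h, Finset.mem_insert, Finset.mem_singleton] at this
            rcases this with h1 | h2
            · exact h1
            · exact absurd (h2.trans hpc.symm) (hcp (hpadj v hne)).symm
      exact key (G.dist v₀ v) v le_rfl
    exact ⟨c0, ⟨hmem, hc0p⟩, fun c hc => huniq c hc⟩
end

section
/- Suppose u and v are nonadjacent vertices of a graph G such that in every proper coloring of G using at most t colors, u and v receive different colors. Then G is uniquely (f,t)-list colorable if and only if G + uv (the graph obtained by adding the edge uv) is uniquely (f,t)-list colorable. -/
open SimpleGraph Finset

variable {V : Type*}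

/-- If the nonadjacent vertices `u`, `v` receive different colors in
every proper coloring of `G` with at most `t` colors, then `G` is uniquely
`(f,t)`-list colorable iff `G + uv` is. -/
theorem stmt2 [Fintype V] (G : SimpleGraph V) (u v : V) (hne : u ≠ v)
    (huv : ¬ G.Adj u v) (f : V → ℕ) (t : ℕ)
    (hdiff : ∀ c : G.Coloring (Fin t), c u ≠ c v) :
    UniqFT G f t ↔ UniqFT (G ⊔ SimpleGraph.fromEdgeSet {s(u, v)}) f t := by
  have key : ∀ (L : V → Finset ℕ), (Finset.univ.biUnion L).card = t →
      ∀ c, IsLC G L c ↔ IsLC (G ⊔ SimpleGraph.fromEdgeSet {s(u, v)}) L c := by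
    intro L hcard c
    constructor
    · rintro ⟨h1, h2⟩
      have hmem : ∀ x, c x ∈ Finset.univ.biUnion L := fun x =>
        Finset.mem_biUnion.2 ⟨x, Finset.mem_univ x, h1 x⟩
      let e : (Finset.univ.biUnion L : Finset ℕ) ≃ Fin t :=
        (Finset.univ.biUnion L).equivFin.trans (finCongr hcard)
      have hcuv : c u ≠ c v := by
        let col : G.Coloring (Fin t) := SimpleGraph.Coloring.mk
          (fun x => e ⟨c x, hmem x⟩)
          (by
            intro a b hab h
            exact h2 hab (congrArg Subtype.val (e.injective h)))
        intro h
        exact hdiff col (by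
          show e ⟨c u, hmem u⟩ = e ⟨c v, hmem v⟩
          exact congrArg e (Subtype.ext h))
      refine ⟨h1, fun a b hab => ?_⟩
      rcases hab with hab | hab
      · exact h2 hab
      · rw [SimpleGraph.fromEdgeSet_adj] at hab
        have := hab.1
        simp only [Set.mem_singleton_iff, Sym2.eq_iff] at this
        rcases this with ⟨rfl, rfl⟩ | ⟨rfl, rfl⟩
        · exact hcuv
        · exact fun h => hcuv h.symm
    · rintro ⟨h1, h2⟩
      exact ⟨h1, fun a b hab => h2 (Or.inl hab)⟩
  constructor
  · rintro ⟨L, hL, hc, c, hc1, hc2⟩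
    exact ⟨L, hL, hc, c, (key L hc c).1 hc1,
      fun c' hc' => hc2 c' ((key L hc c').2 hc')⟩
  · rintro ⟨L, hL, hc, c, hc1, hc2⟩
    exact ⟨L, hL, hc, c, (key L hc c).2 hc1,
      fun c' hc' => hc2 c' ((key L hc c').1 hc')⟩
end

section
/- Every 2-connected graph in which every cycle is chordless (induced) has a vertex of degree 2. -/
open SimpleGraph Finset

variable {V : Type*}

/-!
Two-connectivity gives every vertex two neighbours, so a counterexample has minimum degree at
least 3. Let `p` be a longest path, starting at `u`: maximality puts every neighbour of `u` on
`p`, so the shortest prefix of `p` containing them all ends at a neighbour `f` and closes up, with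
the edge `fu`, into a cycle. A third neighbour of `u`, other than `f` and the second vertex of `p`,
then spans a chord with `u`.
-/

namespace SimpleGraph.Walk

variable {G : SimpleGraph V}

lemma exists_eq_append_of_forall_mem_support {N : Set V} :
    ∀ {u v : V} (p : G.Walk u v), N.Nonempty → (∀ x ∈ N, x ∈ p.support) →
      ∃ f ∈ N, ∃ (q : G.Walk u f) (r : G.Walk f v), p = q.append r ∧ ∀ x ∈ N, x ∈ q.support
  | u, _, nil, ⟨y, hy⟩, hN => by
    have hyu : y = u := by simpa using hN y hy
    exact ⟨u, hyu ▸ hy, nil, nil, rfl, fun x hx => by simpa using hN x hx⟩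
  | u, _, cons h p, hne, hN => by
    by_cases hrest : (N \ {u}).Nonempty
    · obtain ⟨f, hf, q, r, rfl, hq⟩ := exists_eq_append_of_forall_mem_support
        (N := N \ {u}) p hrest fun x hx => (List.mem_cons.mp (hN x hx.1)).resolve_left hx.2
      refine ⟨f, hf.1, cons h q, r, rfl, fun x hx => ?_⟩
      by_cases hxu : x = u
      · simp [hxu]
      · simpa using Or.inr (hq x ⟨hx, hxu⟩)
    · have hsub : N ⊆ {u} := Set.sdiff_eq_empty.mp (Set.not_nonempty_iff_eq_empty.mp hrest)
      obtain ⟨y, hy⟩ := hne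
      refine ⟨u, hsub hy ▸ hy, nil, cons h p, rfl, fun x hx => ?_⟩
      simpa using hsub hx

lemma IsPath.eq_of_mk_mem_edges_cons {u w v x : V} {h : G.Adj u w} {q : G.Walk w v}
    (hp : (cons h q).IsPath) (he : s(u, x) ∈ (cons h q).edges) : x = w := by
  rw [edges_cons, List.mem_cons] at he
  rcases he with he | he
  · exact Sym2.congr_right.mp he
  · exact absurd (q.fst_mem_support_of_mem_edges he) ((cons_isPath_iff h q).mp hp).2

end SimpleGraph.Walk

namespace SimpleGraph

variable {G : SimpleGraph V}

open Walk

theorem exists_isCycle_with_chord_of_three_le_ncard_neighborSet [Nonempty V] [Finite G.edgeSet]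
    (hdeg : ∀ v, 3 ≤ (G.neighborSet v).ncard) :
    ∃ (v : V) (c : G.Walk v v), c.IsCycle ∧
      ∃ a b, a ∈ c.support ∧ b ∈ c.support ∧ G.Adj a b ∧ s(a, b) ∉ c.edges := by
  obtain ⟨u, v, p, hp, hmax⟩ := exists_isPath_forall_isPath_length_le_length G
  have hnbr : ∀ x ∈ G.neighborSet u, x ∈ p.support := fun x hx => by
    by_contra hxp
    have := hmax _ _ _ (hp.cons hxp (h := G.adj_symm hx))
    simp at this
  obtain ⟨u', hu'⟩ : (G.neighborSet u).Nonempty :=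
    Set.nonempty_of_ncard_ne_zero (by have := hdeg u; omega)
  obtain ⟨f, hf, q, r, rfl, hq⟩ :=
    p.exists_eq_append_of_forall_mem_support ⟨u', hu'⟩ hnbr
  have hqp : q.IsPath := hp.of_append_left
  cases q with
  | nil => exact absurd hf (G.loopless.irrefl u)
  | @cons _ w₀ _ h₀ q₁ =>
    obtain ⟨m, hm, hmne⟩ := Set.exists_mem_notMem_of_ncard_lt_ncard (t := G.neighborSet u)
      ((Set.ncard_insert_le w₀ {f}).trans_lt (by rw [Set.ncard_singleton]; have := hdeg u; omega))
    simp only [Set.mem_insert_iff, Set.mem_singleton_iff, not_or] at hmne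
    obtain ⟨hmw₀, hmf⟩ := hmne
    have hfw₀ : f ≠ w₀ := by
      rintro rfl
      have hq₁ : q₁.support = [f] :=
        nil_iff_support_eq.mp (isPath_iff_nil.mp ((cons_isPath_iff h₀ q₁).mp hqp).1)
      have := hq m hm
      simp only [support_cons, hq₁, List.mem_cons, List.not_mem_nil, or_false] at this
      exact this.elim (fun hmu => G.loopless.irrefl u (hmu ▸ hm)) hmw₀
    refine ⟨f, cons (G.adj_symm hf) (cons h₀ q₁), ?_, u, m, ?_, ?_, hm, ?_⟩
    · refine (cons_isCycle_iff _ _).mpr ⟨hqp, fun he => hfw₀ ?_⟩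
      exact hqp.eq_of_mk_mem_edges_cons (Sym2.eq_swap ▸ he)
    · simp
    · simpa using Or.inr (hq m hm)
    · rw [edges_cons, List.mem_cons, not_or]
      exact ⟨fun he => hmf (Sym2.congr_right.mp (he.trans Sym2.eq_swap)),
        fun he => hmw₀ (hqp.eq_of_mk_mem_edges_cons he)⟩

end SimpleGraph

section NoCutVtx

variable {G : SimpleGraph V}

lemma NoCutVtx.exists_adj_ne (hcut : NoCutVtx G) {u v w : V}
    (huv : u ≠ v) (huw : u ≠ w) (hvw : v ≠ w) : ∃ x, G.Adj v x ∧ x ≠ w := by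
  obtain ⟨p⟩ := hcut w ⟨v, by simp [hvw]⟩ ⟨u, by simp [huw]⟩
  cases p with
  | nil => exact absurd rfl huv.symm
  | @cons _ x _ hadj _ =>
    rw [Subgraph.coe_adj, Subgraph.deleteVerts_adj] at hadj
    exact ⟨x, by simpa using hadj.2.2.2.2, by simpa using hadj.2.2.2.1⟩

lemma NoCutVtx.two_le_ncard_neighborSet [Fintype V] (hcut : NoCutVtx G)
    (hcard : 3 ≤ Fintype.card V) (v : V) : 2 ≤ (G.neighborSet v).ncard := by
  classical
  have third (w : V) : ∃ u, u ≠ v ∧ u ≠ w := by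
    obtain ⟨u, -, hu⟩ := Finset.exists_mem_notMem_of_card_lt_card
      ((Finset.card_le_two (a := v) (b := w)).trans_lt (hcard.trans_eq Finset.card_univ.symm))
    exact ⟨u, by simpa [not_or] using hu⟩
  obtain ⟨w, hwv, -⟩ := third v
  obtain ⟨u₁, hu₁v, hu₁w⟩ := third w
  obtain ⟨x₁, hx₁, -⟩ := hcut.exists_adj_ne hu₁v hu₁w hwv.symm
  obtain ⟨u₂, hu₂v, hu₂x₁⟩ := third x₁
  obtain ⟨x₂, hx₂, hx₂x₁⟩ := hcut.exists_adj_ne hu₂v hu₂x₁ (G.ne_of_adj hx₁)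
  exact (Set.one_lt_ncard).mpr ⟨x₂, hx₂, x₁, hx₁, hx₂x₁⟩

end NoCutVtx

/-- A 2-connected graph in which every cycle is chordless has a
vertex of degree 2. -/
theorem stmt4 [Fintype V] (G : SimpleGraph V) (h2 : TwoConn G)
    (hchordless : ∀ (v : V) (w : G.Walk v v), w.IsCycle →
      ∀ a b, a ∈ w.support → b ∈ w.support → G.Adj a b → s(a, b) ∈ w.edges) :
    ∃ v, (G.neighborSet v).ncard = 2 := by
  obtain ⟨hcard, -, hcut⟩ := h2
  have : Nonempty V := Fintype.card_pos_iff.mp (by omega)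
  by_contra! hdeg
  obtain ⟨v, c, hc, a, b, ha, hb, hab, hne⟩ :=
    exists_isCycle_with_chord_of_three_le_ncard_neighborSet fun v =>
      (hcut.two_le_ncard_neighborSet hcard v).lt_of_ne' (hdeg v)
  exact hne (hchordless v c hc a b ha hb hab)
end

section
/- Every theta graph θ_{p,q,r} other than θ_{2,2,2} = K_{2,3} is uniquely (2,3)-list colorable. -/
open SimpleGraph Finset

variable {V : Type*}

/-! Give the endpoints `u`, `v` of the three paths the lists `{0,1}` and `{0,2}`, and split each
path into three consecutive bands with lists `{0,1}`, `{1,2}`, `{0,2}`. A colouring alternates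
inside a band, so a path only constrains the colours of `u`, `v` and of the first vertex of its
middle band. Choosing the bands according to the parities of `p, q, r`, three of the four
colour pairs for `(u, v)` are each ruled out by one path, and the remaining pair forces every
band. A middle band is only needed when `p, q, r` have equal parity; in the all-even case one
path must have length at least `4`, which is where `θ_{2,2,2}` is excluded. -/

def IsPathColoring (ℓ : ℕ → Finset ℕ) (n : ℕ) (s : ℕ → ℕ) : Prop :=
  (∀ i ≤ n, s i ∈ ℓ i) ∧ ∀ i < n, s i ≠ s (i + 1)

lemma IsPathColoring.congr {ℓ : ℕ → Finset ℕ} {n : ℕ} {s s' : ℕ → ℕ} (hs : IsPathColoring ℓ n s)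
    (h : ∀ i ≤ n, s i = s' i) : IsPathColoring ℓ n s' :=
  ⟨fun i hi => h i hi ▸ hs.1 i hi, fun i hi => h i hi.le ▸ h (i + 1) hi ▸ hs.2 i hi⟩

/-- The colour `t` steps after `v` when alternating in `{x, y}`: `x + y - v` is the other colour. -/
def alternate (x y t v : ℕ) : ℕ := if t % 2 = 0 then v else x + y - v

lemma alternate_of_even {x y t : ℕ} (v : ℕ) (ht : t % 2 = 0) : alternate x y t v = v := if_pos ht

lemma alternate_of_odd {x y t : ℕ} (v : ℕ) (ht : t % 2 = 1) : alternate x y t v = x + y - v :=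
  if_neg (by omega)

lemma alternate_ne_alternate_succ {x y v : ℕ} (hv : v = x ∨ v = y) (hxy : x ≠ y) (t : ℕ) :
    alternate x y t v ≠ alternate x y (t + 1) v := by
  simp only [alternate]; split_ifs <;> omega

lemma eq_alternate_of_forall_mem_pair {s : ℕ → ℕ} {x y j j' : ℕ}
    (hmem : ∀ i, j ≤ i → i ≤ j' → s i = x ∨ s i = y)
    (hne : ∀ i, j ≤ i → i < j' → s i ≠ s (i + 1)) :
    ∀ i, j ≤ i → i ≤ j' → s i = alternate x y (i - j) (s j) := by
  intro i hji
  induction i, hji using Nat.le_induction with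
  | base => simp [alternate]
  | succ i hji ih =>
    intro hi
    have hstep := hne i hji (by omega)
    have hsi := hmem i hji (by omega)
    have hsj := hmem j le_rfl (by omega)
    have hsi' := hmem (i + 1) (by omega) hi
    rw [ih (by omega)] at hstep hsi
    simp only [alternate, Nat.sub_add_comm hji] at hstep hsi ⊢
    split_ifs at hstep hsi ⊢ <;> omega

/- A band path of length `n` with breakpoints `1 ≤ k ≤ m ≤ n` carries the list `{0,1}` at
positions `[0,k)`, `{1,2}` at `[k,m)` and `{0,2}` at `[m,n]`. Its proper colourings alternate
inside each band, so they are determined by the colours `a` at `0`, `z` at `k` and `b` at `n`;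
`BandAdmissible` is the condition at the band boundaries for `(a, z, b)` to come from one. -/

def bandList (k m i : ℕ) : Finset ℕ := if i < k then {0, 1} else if i < m then {1, 2} else {0, 2}

def bandColoring (k m n a z b i : ℕ) : ℕ :=
  if i < k then alternate 0 1 i a else if i < m then alternate 1 2 (i - k) z
  else alternate 0 2 (n - i) b

def BandAdmissible (k m n a z b : ℕ) : Prop :=
  (a = 0 ∨ a = 1) ∧ (b = 0 ∨ b = 2) ∧ alternate 0 1 (k - 1) a ≠ z ∧
    if k < m then (z = 1 ∨ z = 2) ∧ alternate 1 2 (m - 1 - k) z ≠ alternate 0 2 (n - m) b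
    else z = alternate 0 2 (n - k) b

section Band

variable {k m n : ℕ}

lemma bandList_zero (hk : 0 < k) : bandList k m 0 = {0, 1} := if_pos hk

lemma bandList_of_le {i : ℕ} (hm : m ≤ i) (hkm : k ≤ m) : bandList k m i = {0, 2} := by
  rw [bandList, if_neg (by omega), if_neg (by omega)]

lemma card_bandList (i : ℕ) : (bandList k m i).card = 2 := by
  unfold bandList; split_ifs <;> rfl

lemma bandList_subset (i : ℕ) : bandList k m i ⊆ {0, 1, 2} := by
  unfold bandList; split_ifs <;> decide

lemma mem_bandList {i c : ℕ} : c ∈ bandList k m i ↔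
    if i < k then c = 0 ∨ c = 1 else if i < m then c = 1 ∨ c = 2 else c = 0 ∨ c = 2 := by
  unfold bandList; split_ifs <;> simp

lemma bandColoring_of_lt {a z b i : ℕ} (hi : i < k) :
    bandColoring k m n a z b i = alternate 0 1 i a := if_pos hi

lemma bandColoring_of_mem_Ico {a z b i : ℕ} (hki : k ≤ i) (him : i < m) :
    bandColoring k m n a z b i = alternate 1 2 (i - k) z := by
  rw [bandColoring, if_neg (by omega), if_pos him]

lemma bandColoring_of_le {a z b i : ℕ} (hmi : m ≤ i) (hkm : k ≤ m) :
    bandColoring k m n a z b i = alternate 0 2 (n - i) b := by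
  rw [bandColoring, if_neg (by omega), if_neg (by omega)]

lemma BandAdmissible.bandColoring_self {a z b : ℕ} (h : BandAdmissible k m n a z b) :
    bandColoring k m n a z b k = z := by
  obtain ⟨-, -, -, hmid⟩ := h
  rw [bandColoring, if_neg (lt_irrefl k)]
  split_ifs at hmid ⊢
  · simp [alternate]
  · exact hmid.symm

theorem BandAdmissible.isPathColoring {a z b : ℕ} (h : BandAdmissible k m n a z b)
    (hkm : k ≤ m) :
    IsPathColoring (bandList k m) n (bandColoring k m n a z b) := by
  have hz := h.bandColoring_self
  obtain ⟨ha, hb, hkz, hmid⟩ := h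
  refine ⟨fun i hi => ?_, fun i hi => ?_⟩
  · rw [mem_bandList]
    simp only [bandColoring, alternate]
    split_ifs at hmid ⊢ <;> omega
  · rcases (by omega : i + 1 < k ∨ i + 1 = k ∨ (k ≤ i ∧ i + 1 < m) ∨ (k ≤ i ∧ i + 1 = m) ∨ m ≤ i)
      with h | h | h | h | h
    · rw [bandColoring_of_lt (by omega), bandColoring_of_lt h]
      exact alternate_ne_alternate_succ ha (by omega) i
    · rw [h, hz, bandColoring_of_lt (by omega), show i = k - 1 by omega]
      exact hkz
    · rw [if_pos (by omega)] at hmid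
      rw [bandColoring_of_mem_Ico h.1 (by omega), bandColoring_of_mem_Ico (by omega) h.2,
        Nat.sub_add_comm h.1]
      exact alternate_ne_alternate_succ hmid.1 (by omega) _
    · rw [if_pos (by omega)] at hmid
      rw [bandColoring_of_mem_Ico h.1 (by omega), bandColoring_of_le (by omega) hkm, h.2,
        show i - k = m - 1 - k by omega]
      exact hmid.2
    · rw [bandColoring_of_le h hkm, bandColoring_of_le (by omega) hkm,
        show n - i = n - (i + 1) + 1 by omega]
      exact (alternate_ne_alternate_succ hb (by omega) _).symm

lemma IsPathColoring.eq_bandColoring {s : ℕ → ℕ} (hs : IsPathColoring (bandList k m) n s)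
    (hkm : k ≤ m) {i : ℕ} (hi : i ≤ n) :
    s i = bandColoring k m n (s 0) (s k) (s n) i := by
  have hmem : ∀ i ≤ n, _ := fun i hi => mem_bandList.1 (hs.1 i hi)
  rcases (by omega : i < k ∨ (k ≤ i ∧ i < m) ∨ m ≤ i) with h | h | h
  · rw [bandColoring_of_lt h]
    refine eq_alternate_of_forall_mem_pair (j' := i) (fun i' _ hi' => ?_)
      (fun i' _ hi' => hs.2 i' (by omega)) i (Nat.zero_le i) le_rfl
    simpa [if_pos (show i' < k by omega)] using hmem i' (by omega)
  · rw [bandColoring_of_mem_Ico h.1 h.2]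
    refine eq_alternate_of_forall_mem_pair (j' := i) (fun i' hi' hi'' => ?_)
      (fun i' _ hi' => hs.2 i' (by omega)) i h.1 le_rfl
    simpa [if_neg (show ¬i' < k by omega), if_pos (show i' < m by omega)]
      using hmem i' (by omega)
  · rw [bandColoring_of_le h hkm]
    have hV : ∀ i', i ≤ i' → i' ≤ n → s i' = 0 ∨ s i' = 2 := fun i' hi' hi'' => by
      simpa [if_neg (show ¬i' < k by omega), if_neg (show ¬i' < m by omega)]
        using hmem i' hi''
    have hsn := eq_alternate_of_forall_mem_pair hV (fun i' _ hi' => hs.2 i' hi') n hi le_rfl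
    have hsi := hV i le_rfl hi
    simp only [alternate] at hsn ⊢
    split_ifs at hsn ⊢ <;> omega

theorem IsPathColoring.bandAdmissible {s : ℕ → ℕ} (hs : IsPathColoring (bandList k m) n s)
    (hk : 0 < k) (hkm : k ≤ m) (hmn : m ≤ n) :
    BandAdmissible k m n (s 0) (s k) (s n) := by
  have hmem : ∀ i ≤ n, _ := fun i hi => mem_bandList.1 (hs.1 i hi)
  have h0 := hmem 0 (Nat.zero_le n)
  have hn := hmem n le_rfl
  rw [if_pos hk] at h0
  rw [if_neg (by omega), if_neg (by omega)] at hn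
  have hk₁ : s (k - 1) = alternate 0 1 (k - 1) (s 0) := by
    rw [hs.eq_bandColoring hkm (by omega), bandColoring_of_lt (by omega)]
  refine ⟨h0, hn, hk₁ ▸ by simpa [Nat.sub_add_cancel hk] using hs.2 (k - 1) (by omega), ?_⟩
  split_ifs with hkm'
  · have hk' := hmem k (by omega)
    rw [if_neg (lt_irrefl k), if_pos hkm'] at hk'
    have hm₁ : s (m - 1) = alternate 1 2 (m - 1 - k) (s k) := by
      rw [hs.eq_bandColoring hkm (by omega), bandColoring_of_mem_Ico (by omega) (by omega)]
    have hm : s m = alternate 0 2 (n - m) (s n) := by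
      rw [hs.eq_bandColoring hkm hmn, bandColoring_of_le le_rfl hkm]
    refine ⟨hk', hm₁ ▸ hm ▸ ?_⟩
    simpa [Nat.sub_add_cancel (show 1 ≤ m by omega)] using hs.2 (m - 1) (by omega)
  · rw [hs.eq_bandColoring hkm (by omega), bandColoring_of_le (by omega) hkm]

end Band

section Theta

variable {G : SimpleGraph V}

structure IsThetaFamily {ι : Type*} {u v : V} (P : ι → G.Walk u v) : Prop where
  isPath : ∀ j, (P j).IsPath
  support_inter : ∀ j j', j ≠ j' → ∀ x ∈ (P j).support, x ∈ (P j').support → x = u ∨ x = v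
  support_cover : ∀ x, ∃ j, x ∈ (P j).support
  edges_cover : ∀ e ∈ G.edgeSet, ∃ j, e ∈ (P j).edges

namespace IsThetaFamily

variable {ι : Type*} {u v : V} {P : ι → G.Walk u v}

lemma exists_getVert_eq (hP : IsThetaFamily P) (x : V) :
    ∃ j, ∃ i ≤ (P j).length, (P j).getVert i = x := by
  obtain ⟨j, hj⟩ := hP.support_cover x
  obtain ⟨i, hx, hi⟩ := Walk.mem_support_iff_exists_getVert.1 hj
  exact ⟨j, i, hi, hx⟩

lemma exists_glue {α : Type*} [Nonempty α] (hP : IsThetaFamily P) (f : ι → ℕ → α) {A B : α}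
    (hA : ∀ j, f j 0 = A) (hB : ∀ j, f j (P j).length = B) :
    ∃ F : V → α, ∀ j, ∀ i ≤ (P j).length, F ((P j).getVert i) = f j i := by
  let g : {x : ι × ℕ // x.2 ≤ (P x.1).length} → V := fun x => (P x.1.1).getVert x.1.2
  have hfg : Function.FactorsThrough (fun x => f x.1.1 x.1.2) g := by
    rintro ⟨⟨j, i⟩, hi : i ≤ (P j).length⟩ ⟨⟨j', i'⟩, hi' : i' ≤ (P j').length⟩
      (h : (P j).getVert i = (P j').getVert i')
    dsimp only
    by_cases hj : j = j'
    · subst hj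
      rw [(hP.isPath j).getVert_injOn hi hi' h]
    · have hij := (hP.isPath j).getVert_eq_start_iff hi
      have hij' := (hP.isPath j').getVert_eq_start_iff hi'
      have hij₂ := (hP.isPath j).getVert_eq_end_iff hi
      have hij₂' := (hP.isPath j').getVert_eq_end_iff hi'
      rcases hP.support_inter j j' hj _ ((P j).getVert_mem_support i)
        (h ▸ (P j').getVert_mem_support i') with hx | hx
      · rw [hij.1 hx, hij'.1 (h ▸ hx), hA, hA]
      · rw [hij₂.1 hx, hij₂'.1 (h ▸ hx), hB, hB]
  obtain ⟨F, hF⟩ := (Function.factorsThrough_iff _).1 hfg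
  exact ⟨F, fun j i hi => (congrFun hF ⟨(j, i), hi⟩).symm⟩

lemma isLC_iff (hP : IsThetaFamily P) {L : V → Finset ℕ} {ℓ : ι → ℕ → Finset ℕ}
    (hL : ∀ j, ∀ i ≤ (P j).length, L ((P j).getVert i) = ℓ j i) (c : V → ℕ) :
    IsLC G L c ↔ ∀ j, IsPathColoring (ℓ j) (P j).length (fun i => c ((P j).getVert i)) := by
  refine ⟨fun hc j => ⟨fun i hi => hL j i hi ▸ hc.1 _, fun i hi =>
    hc.2 ((P j).adj_getVert_succ hi)⟩, fun hc => ⟨fun x => ?_, fun x y hxy => ?_⟩⟩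
  · obtain ⟨j, i, hi, rfl⟩ := hP.exists_getVert_eq x
    exact hL j i hi ▸ (hc j).1 i hi
  · obtain ⟨j, hj⟩ := hP.edges_cover s(x, y) hxy
    obtain ⟨i, hi, he⟩ := (P j).mk_mem_edges_iff_exists.1 hj
    have hne := (hc j).2 i hi
    rcases Sym2.eq_iff.1 he with ⟨rfl, rfl⟩ | ⟨rfl, rfl⟩
    exacts [hne, hne.symm]

lemma exists_bandLists [Fintype V] [Nonempty ι] (hP : IsThetaFamily P) (k m : ι → ℕ) (hk : ∀ j, 0 < k j)
    (hkm : ∀ j, k j ≤ m j) (hmn : ∀ j, m j ≤ (P j).length) :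
    ∃ L : V → Finset ℕ, (∀ j, ∀ i ≤ (P j).length, L ((P j).getVert i) = bandList (k j) (m j) i) ∧
      (∀ x, (L x).card = 2) ∧ univ.biUnion L = {0, 1, 2} := by
  obtain ⟨L, hL⟩ := hP.exists_glue (fun j => bandList (k j) (m j))
    (fun j => bandList_zero (hk j)) (fun j => bandList_of_le (hmn j) (hkm j))
  obtain ⟨j⟩ := ‹Nonempty ι›
  have hLu : L u = {0, 1} := by simpa [bandList_zero (hk j)] using hL j 0 (Nat.zero_le _)
  have hLv : L v = {0, 2} := by simpa [bandList_of_le (hmn j) (hkm j)] using hL j _ le_rfl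
  refine ⟨L, hL, fun x => ?_, subset_antisymm (biUnion_subset.2 fun x _ => ?_) fun c hc => ?_⟩
  · obtain ⟨j, i, hi, rfl⟩ := hP.exists_getVert_eq x
    exact hL j i hi ▸ card_bandList i
  · obtain ⟨j, i, hi, rfl⟩ := hP.exists_getVert_eq x
    exact hL j i hi ▸ bandList_subset i
  · simp only [mem_insert, mem_singleton] at hc
    rcases hc with rfl | rfl | rfl
    exacts [mem_biUnion.2 ⟨u, mem_univ _, by simp [hLu]⟩,
      mem_biUnion.2 ⟨u, mem_univ _, by simp [hLu]⟩, mem_biUnion.2 ⟨v, mem_univ _, by simp [hLv]⟩]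

theorem uniqKT_two_three [Fintype V] [Nonempty ι] (hP : IsThetaFamily P) (k m z : ι → ℕ)
    (a b : ℕ) (hk : ∀ j, 0 < k j) (hkm : ∀ j, k j ≤ m j) (hmn : ∀ j, m j ≤ (P j).length)
    (hadm : ∀ j, BandAdmissible (k j) (m j) (P j).length a (z j) b)
    (huniq : ∀ a' b' (z' : ι → ℕ), (∀ j, BandAdmissible (k j) (m j) (P j).length a' (z' j) b') →
      a' = a ∧ b' = b ∧ z' = z) :
    UniqKT G 2 3 := by
  obtain ⟨L, hL, hcard, hunion⟩ := hP.exists_bandLists k m hk hkm hmn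
  obtain ⟨C, hC⟩ := hP.exists_glue (fun j => bandColoring (k j) (m j) (P j).length a (z j) b)
    (A := a) (B := b) (fun j => by simp [bandColoring_of_lt (hk j), alternate])
    (fun j => by simp [bandColoring_of_le (hmn j) (hkm j), alternate])
  refine ⟨L, hcard, by rw [hunion]; rfl, C, (hP.isLC_iff hL C).2 fun j => ?_, fun c hc => ?_⟩
  · exact ((hadm j).isPathColoring (hkm j)).congr fun i hi => (hC j i hi).symm
  · have hs := (hP.isLC_iff hL c).1 hc
    obtain ⟨rfl, rfl, rfl⟩ := huniq (c u) (c v) (fun j => c ((P j).getVert (k j)))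
      (fun j => by simpa using (hs j).bandAdmissible (hk j) (hkm j) (hmn j))
    funext x
    obtain ⟨j, i, hi, rfl⟩ := hP.exists_getVert_eq x
    rw [hC j i hi, (hs j).eq_bandColoring (hkm j) hi]
    simp

end IsThetaFamily

lemma IsTheta.exists_isThetaFamily {p q r : ℕ} (h : IsTheta G p q r) :
    ∃ (u v : V) (P : Fin 3 → G.Walk u v), IsThetaFamily P ∧ ∀ j, (P j).length = ![p, q, r] j := by
  obtain ⟨u, v, P₁, P₂, P₃, -, h₁, h₂, h₃, rfl, rfl, rfl, h₁₂, h₁₃, h₂₃, hcov, hedge⟩ := h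
  refine ⟨u, v, ![P₁, P₂, P₃], ⟨?_, ?_, fun x => ?_, fun e he => ?_⟩, ?_⟩
  · intro j; fin_cases j <;> assumption
  · intro j j' hj x hx hx'
    fin_cases j <;> fin_cases j' <;> first | exact absurd rfl hj | simp_all
  · rcases hcov x with h | h | h
    exacts [⟨0, h⟩, ⟨1, h⟩, ⟨2, h⟩]
  · rcases hedge e he with h | h | h
    exacts [⟨0, h⟩, ⟨1, h⟩, ⟨2, h⟩]
  · intro j; fin_cases j <;> rfl

lemma IsTheta.swap₁₂ {p q r : ℕ} (h : IsTheta G p q r) : IsTheta G q p r := by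
  obtain ⟨u, v, P₁, P₂, P₃, huv, h₁, h₂, h₃, hp, hq, hr, h₁₂, h₁₃, h₂₃, hcov, hedge⟩ := h
  refine ⟨u, v, P₂, P₁, P₃, huv, h₂, h₁, h₃, hq, hp, hr, fun x hx hx' => h₁₂ x hx' hx, h₂₃, h₁₃,
    fun x => ?_, fun e he => ?_⟩
  · rcases hcov x with h | h | h <;> simp [h]
  · rcases hedge e he with h | h | h <;> simp [h]

lemma IsTheta.swap₂₃ {p q r : ℕ} (h : IsTheta G p q r) : IsTheta G p r q := by
  obtain ⟨u, v, P₁, P₂, P₃, huv, h₁, h₂, h₃, hp, hq, hr, h₁₂, h₁₃, h₂₃, hcov, hedge⟩ := h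
  refine ⟨u, v, P₁, P₃, P₂, huv, h₁, h₃, h₂, hp, hr, hq, h₁₃, h₁₂, fun x hx hx' => h₂₃ x hx' hx,
    fun x => ?_, fun e he => ?_⟩
  · rcases hcov x with h | h | h <;> simp [h]
  · rcases hedge e he with h | h | h <;> simp [h]

theorem IsTheta.uniqKT_two_three [Fintype V] {p q r : ℕ} (hθ : IsTheta G p q r)
    (k m z : Fin 3 → ℕ) (a b : ℕ) (hk : ∀ j, 0 < k j) (hkm : ∀ j, k j ≤ m j)
    (hmn : ∀ j, m j ≤ ![p, q, r] j)
    (hadm : ∀ j, BandAdmissible (k j) (m j) (![p, q, r] j) a (z j) b)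
    (huniq : ∀ a' b' (z' : Fin 3 → ℕ),
      (∀ j, BandAdmissible (k j) (m j) (![p, q, r] j) a' (z' j) b') → a' = a ∧ b' = b ∧ z' = z) :
    UniqKT G 2 3 := by
  obtain ⟨u, v, P, hP, hlen⟩ := hθ.exists_isThetaFamily
  simp only [← hlen] at hmn hadm huniq
  exact hP.uniqKT_two_three k m z a b hk hkm hmn hadm huniq

theorem uniqKT_of_even_even_odd [Fintype V] {p q r : ℕ} (hθ : IsTheta G p q r)
    (hp : p % 2 = 0) (hp₀ : 0 < p) (hq : q % 2 = 0) (hq₀ : 0 < q) (hr : r % 2 = 1) :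
    UniqKT G 2 3 := by
  -- the three paths rule out the colour pairs `(1,0)`, `(0,2)`, `(0,0)` of `(u, v)`
  refine hθ.uniqKT_two_three ![p, 1, r] ![p, 1, r] ![2, 0, 2] 1 2 ?_ ?_ ?_ ?_ ?_
  all_goals
    simp (disch := omega) only [Fin.forall_fin_succ, IsEmpty.forall_iff, funext_iff,
      Matrix.cons_val_zero, Matrix.cons_val_succ, Fin.succ_zero_eq_one, BandAdmissible,
      alternate_of_even, alternate_of_odd, if_neg, and_true, true_and, or_true]
    try intro a' b' z'
    omega

theorem uniqKT_of_odd_odd_even [Fintype V] {p q r : ℕ} (hθ : IsTheta G p q r)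
    (hp : p % 2 = 1) (hp₃ : 3 ≤ p) (hq : q % 2 = 1) (hr : r % 2 = 0) (hr₀ : 0 < r) :
    UniqKT G 2 3 := by
  -- the three paths rule out the colour pairs `(1,2)`, `(0,0)`, `(1,0)` of `(u, v)`
  refine hθ.uniqKT_two_three ![p - 1, q, r] ![p - 1, q, r] ![0, 2, 2] 0 2 ?_ ?_ ?_ ?_ ?_
  all_goals
    simp (disch := omega) only [Fin.forall_fin_succ, IsEmpty.forall_iff, funext_iff,
      Matrix.cons_val_zero, Matrix.cons_val_succ, Fin.succ_zero_eq_one, BandAdmissible,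
      alternate_of_even, alternate_of_odd, if_neg, and_true, true_and, or_true, true_or]
    try intro a' b' z'
    omega

theorem uniqKT_of_odd_odd_odd [Fintype V] {p q r : ℕ} (hθ : IsTheta G p q r)
    (hp : p % 2 = 1) (hp₃ : 3 ≤ p) (hq : q % 2 = 1) (hr : r % 2 = 1) (hr₃ : 3 ≤ r) :
    UniqKT G 2 3 := by
  -- the three paths rule out the colour pairs `(0,2)`, `(0,0)`, `(1,0)` of `(u, v)`
  refine hθ.uniqKT_two_three ![p - 1, q, 1] ![p, q, 2] ![1, 2, 2] 1 2 ?_ ?_ ?_ ?_ ?_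
  all_goals
    simp (disch := omega) only [Fin.forall_fin_succ, IsEmpty.forall_iff, funext_iff,
      Matrix.cons_val_zero, Matrix.cons_val_succ, Fin.succ_zero_eq_one, BandAdmissible,
      alternate_of_even, alternate_of_odd, if_pos, if_neg, and_true, true_and, or_true, true_or]
    try intro a' b' z'
    omega

theorem uniqKT_of_even_even_even [Fintype V] {p q r : ℕ} (hθ : IsTheta G p q r)
    (hp : p % 2 = 0) (hp₀ : 0 < p) (hq : q % 2 = 0) (hq₀ : 0 < q) (hr : r % 2 = 0) (hr₄ : 4 ≤ r) :
    UniqKT G 2 3 := by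
  -- the three paths rule out the colour pairs `(1,0)`, `(1,2)`, `(0,0)` of `(u, v)`
  refine hθ.uniqKT_two_three ![p, 1, 2] ![p, q, r - 1] ![2, 1, 2] 0 2 ?_ ?_ ?_ ?_ ?_
  all_goals
    simp (disch := omega) only [Fin.forall_fin_succ, IsEmpty.forall_iff, funext_iff,
      Matrix.cons_val_zero, Matrix.cons_val_succ, Fin.succ_zero_eq_one, BandAdmissible,
      alternate_of_even, alternate_of_odd, if_pos, if_neg, and_true, true_and, or_true, true_or]
    try intro a' b' z'
    omega

end Theta

/-- Every theta graph `θ_{p,q,r}` other than `θ_{2,2,2} = K_{2,3}`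
is uniquely `(2,3)`-list colorable. -/
theorem stmt6 [Fintype V] (G : SimpleGraph V) (p q r : ℕ)
    (hp : 0 < p) (hq : 0 < q) (hr : 0 < r)
    (h1 : ¬(p = 1 ∧ q = 1)) (h2 : ¬(p = 1 ∧ r = 1)) (h3 : ¬(q = 1 ∧ r = 1))
    (hθ : IsTheta G p q r) (hne : ¬(p = 2 ∧ q = 2 ∧ r = 2)) :
    UniqKT G 2 3 := by
  rcases Nat.mod_two_eq_zero_or_one p with hp₂ | hp₂ <;>
    rcases Nat.mod_two_eq_zero_or_one q with hq₂ | hq₂ <;>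
    rcases Nat.mod_two_eq_zero_or_one r with hr₂ | hr₂
  · by_cases hr₄ : 4 ≤ r
    · exact uniqKT_of_even_even_even hθ hp₂ hp hq₂ hq hr₂ hr₄
    by_cases hq₄ : 4 ≤ q
    · exact uniqKT_of_even_even_even hθ.swap₂₃ hp₂ hp hr₂ hr hq₂ hq₄
    · exact uniqKT_of_even_even_even hθ.swap₁₂.swap₂₃ hq₂ hq hr₂ hr hp₂ (by omega)
  · exact uniqKT_of_even_even_odd hθ hp₂ hp hq₂ hq hr₂
  · exact uniqKT_of_even_even_odd hθ.swap₂₃ hp₂ hp hr₂ hr hq₂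
  · by_cases hq₁ : q = 1
    · exact uniqKT_of_odd_odd_even hθ.swap₁₂.swap₂₃.swap₁₂ hr₂ (by omega) hq₂ hp₂ hp
    · exact uniqKT_of_odd_odd_even hθ.swap₁₂.swap₂₃ hq₂ (by omega) hr₂ hp₂ hp
  · exact uniqKT_of_even_even_odd hθ.swap₁₂.swap₂₃ hq₂ hq hr₂ hr hp₂
  · by_cases hp₁ : p = 1
    · exact uniqKT_of_odd_odd_even hθ.swap₂₃.swap₁₂ hr₂ (by omega) hp₂ hq₂ hq
    · exact uniqKT_of_odd_odd_even hθ.swap₂₃ hp₂ (by omega) hr₂ hq₂ hq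
  · by_cases hp₁ : p = 1
    · exact uniqKT_of_odd_odd_even hθ.swap₁₂ hq₂ (by omega) hp₂ hr₂ hr
    · exact uniqKT_of_odd_odd_even hθ hp₂ (by omega) hq₂ hr₂ hr
  · by_cases hp₁ : p = 1
    · exact uniqKT_of_odd_odd_odd hθ.swap₁₂ hq₂ (by omega) hp₂ hr₂ (by omega)
    by_cases hr₁ : r = 1
    · exact uniqKT_of_odd_odd_odd hθ.swap₂₃ hp₂ (by omega) hr₂ hq₂ (by omega)
    · exact uniqKT_of_odd_odd_odd hθ hp₂ (by omega) hq₂ hr₂ (by omega)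
end

section
/- The graph θ_{2,2,4} (three internally disjoint paths of lengths 2, 2, 4 between two common endpoints) is uniquely (2,3)-list colorable. -/
open SimpleGraph Finset

variable {V : Type*}

lemma path2aux {G : SimpleGraph V} {u v : V} (p : G.Walk u v) (h : p.length = 2) :
    ∃ a, G.Adj u a ∧ G.Adj a v ∧ p.support = [u, a, v] ∧ p.edges = [s(u, a), s(a, v)] := by
  cases p with
  | nil => simp at h
  | cons h1 q =>
    cases q with
    | nil => simp at h
    | cons h2 r =>
      cases r with
      | nil => exact ⟨_, h1, h2, by simp, by simp⟩
      | cons h3 t => simp [SimpleGraph.Walk.length_cons] at h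

lemma path4aux {G : SimpleGraph V} {u v : V} (p : G.Walk u v) (h : p.length = 4) :
    ∃ x1 x2 x3, G.Adj u x1 ∧ G.Adj x1 x2 ∧ G.Adj x2 x3 ∧ G.Adj x3 v ∧
      p.support = [u, x1, x2, x3, v] ∧
      p.edges = [s(u, x1), s(x1, x2), s(x2, x3), s(x3, v)] := by
  cases p with
  | nil => simp at h
  | cons h1 q =>
    cases q with
    | nil => simp at h
    | cons h2 r =>
      cases r with
      | nil => simp at h
      | cons h3 t =>
        cases t with
        | nil => simp at h
        | cons h4 s =>
          cases s with
          | nil => exact ⟨_, _, _, h1, h2, h3, h4, by simp, by simp⟩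
          | cons h5 w => simp [SimpleGraph.Walk.length_cons] at h

def Lfun [DecidableEq V] (u v a b x1 x2 : V) : V → Finset ℕ := fun w =>
  if w = u then {1,2} else if w = v then {1,3} else if w = a then {1,2}
  else if w = b then {2,3} else if w = x1 then {1,2} else if w = x2 then {2,3} else {1,3}

def cfun [DecidableEq V] (u v a b x1 x2 : V) : V → ℕ := fun w =>
  if w = u then 1 else if w = v then 3 else if w = a then 2 else if w = b then 2
  else if w = x1 then 2 else if w = x2 then 3 else 1

set_option maxHeartbeats 2000000 in
/-- The graph `θ_{2,2,4}` is uniquely `(2,3)`-list colorable. -/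
theorem stmt7 [Fintype V] (G : SimpleGraph V) (hθ : IsTheta G 2 2 4) :
    UniqKT G 2 3 := by
  classical
  obtain ⟨u, v, P1, P2, P3, huv, hP1, hP2, hP3, hl1, hl2, hl3, h12, h13, h23, hcov, hecov⟩ := hθ
  obtain ⟨a, hua, hav, hs1, he1⟩ := path2aux P1 hl1
  obtain ⟨b, hub, hbv, hs2, he2⟩ := path2aux P2 hl2
  obtain ⟨x1, x2, x3, hux1, hx12, hx23, hx3v, hs3, he3⟩ := path4aux P3 hl3
  -- nodup facts
  have n1 := hP1.support_nodup; rw [hs1] at n1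
  have n2 := hP2.support_nodup; rw [hs2] at n2
  have n3 := hP3.support_nodup; rw [hs3] at n3
  simp [List.nodup_cons] at n1 n2 n3
  obtain ⟨⟨hau, -⟩, hav'⟩ := n1
  obtain ⟨⟨hbu, -⟩, hbv'⟩ := n2
  obtain ⟨⟨hx1u, hx2u, hx3u, -⟩, ⟨hx12', hx13', hx1v⟩, ⟨hx23', hx2v⟩, hx3v'⟩ := n3
  have hvu : v ≠ u := Ne.symm huv
  -- cross-path distinctness
  have hba : b ≠ a := by
    intro h; rcases h12 a (by simp [hs1]) (by simp [hs2, h]) with h' | h'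
    · exact hau h'.symm
    · exact hav' h'
  have hx1a : x1 ≠ a := by
    intro h; rcases h13 a (by simp [hs1]) (by simp [hs3, h]) with h' | h'
    · exact hau h'.symm
    · exact hav' h'
  have hx2a : x2 ≠ a := by
    intro h; rcases h13 a (by simp [hs1]) (by simp [hs3, h]) with h' | h'
    · exact hau h'.symm
    · exact hav' h'
  have hx3a : x3 ≠ a := by
    intro h; rcases h13 a (by simp [hs1]) (by simp [hs3, h]) with h' | h'
    · exact hau h'.symm
    · exact hav' h'
  have hx1b : x1 ≠ b := by
    intro h; rcases h23 b (by simp [hs2]) (by simp [hs3, h]) with h' | h'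
    · exact hbu h'.symm
    · exact hbv' h'
  have hx2b : x2 ≠ b := by
    intro h; rcases h23 b (by simp [hs2]) (by simp [hs3, h]) with h' | h'
    · exact hbu h'.symm
    · exact hbv' h'
  have hx3b : x3 ≠ b := by
    intro h; rcases h23 b (by simp [hs2]) (by simp [hs3, h]) with h' | h'
    · exact hbu h'.symm
    · exact hbv' h'
  have hav2 : a ≠ v := hav'
  have hbv2 : b ≠ v := hbv'
  have hx21 : x2 ≠ x1 := fun h => hx12' h.symm
  have hx31 : x3 ≠ x1 := fun h => hx13' h.symm
  have hx32 : x3 ≠ x2 := fun h => hx23' h.symm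
  have hau2 : a ≠ u := fun h => hau h.symm
  have hbu2 : b ≠ u := fun h => hbu h.symm
  have hx1u2 : x1 ≠ u := fun h => hx1u h.symm
  have hx2u2 : x2 ≠ u := fun h => hx2u h.symm
  have hx3u2 : x3 ≠ u := fun h => hx3u h.symm
  -- vertex coverage
  have cov : ∀ w : V, w = u ∨ w = v ∨ w = a ∨ w = b ∨ w = x1 ∨ w = x2 ∨ w = x3 := by
    intro w
    rcases hcov w with h | h | h
    · rw [hs1] at h; simp at h; tauto
    · rw [hs2] at h; simp at h; tauto
    · rw [hs3] at h; simp at h; tauto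
  refine ⟨Lfun u v a b x1 x2, fun w => ?_, ?_, cfun u v a b x1 x2, ⟨fun w => ?_, ?_⟩, ?_⟩
  · -- card
    unfold Lfun; split_ifs <;> simp
  · -- biUnion card
    have : Finset.univ.biUnion (Lfun u v a b x1 x2) = {1, 2, 3} := by
      apply Finset.Subset.antisymm
      · intro y hy
        simp only [Finset.mem_biUnion] at hy
        obtain ⟨w, -, hw⟩ := hy
        unfold Lfun at hw
        split_ifs at hw <;>
          (simp only [Finset.mem_insert, Finset.mem_singleton] at hw ⊢; omega)
      · intro y hy
        simp only [Finset.mem_insert, Finset.mem_singleton] at hy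
        simp only [Finset.mem_biUnion]
        rcases hy with rfl | rfl | rfl
        · exact ⟨u, Finset.mem_univ u, by simp [Lfun]⟩
        · exact ⟨u, Finset.mem_univ u, by simp [Lfun]⟩
        · exact ⟨v, Finset.mem_univ v, by simp [Lfun, hvu]⟩
    rw [this]; rfl
  · -- membership
    rcases cov w with rfl | rfl | rfl | rfl | rfl | rfl | rfl <;>
      simp [Lfun, cfun, hvu, hau2, hav2, hbu2, hbv2, hba, hx1u2, hx1v, hx1a, hx1b,
        hx2u2, hx2v, hx2a, hx2b, hx21, hx3u2, hx3v', hx3a, hx3b, hx31, hx32]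
  · -- proper
    intro p q hadj
    have hm : s(p, q) ∈ G.edgeSet := hadj
    rcases hecov _ hm with h | h | h
    · rw [he1] at h
      simp only [List.mem_cons, List.not_mem_nil, or_false, Sym2.eq, Sym2.rel_iff',
        Prod.mk.injEq, Prod.swap_prod_mk] at h
      rcases h with (⟨rfl, rfl⟩ | ⟨rfl, rfl⟩) | (⟨rfl, rfl⟩ | ⟨rfl, rfl⟩) <;>
        simp [cfun, hvu, hau2, hav2, hbu2, hbv2, hba, hx1u2, hx1v, hx1a, hx1b,
          hx2u2, hx2v, hx2a, hx2b, hx21, hx3u2, hx3v', hx3a, hx3b, hx31, hx32]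
    · rw [he2] at h
      simp only [List.mem_cons, List.not_mem_nil, or_false, Sym2.eq, Sym2.rel_iff',
        Prod.mk.injEq, Prod.swap_prod_mk] at h
      rcases h with (⟨rfl, rfl⟩ | ⟨rfl, rfl⟩) | (⟨rfl, rfl⟩ | ⟨rfl, rfl⟩) <;>
        simp [cfun, hvu, hau2, hav2, hbu2, hbv2, hba, hx1u2, hx1v, hx1a, hx1b,
          hx2u2, hx2v, hx2a, hx2b, hx21, hx3u2, hx3v', hx3a, hx3b, hx31, hx32]
    · rw [he3] at h
      simp only [List.mem_cons, List.not_mem_nil, or_false, Sym2.eq, Sym2.rel_iff',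
        Prod.mk.injEq, Prod.swap_prod_mk] at h
      rcases h with (⟨rfl, rfl⟩ | ⟨rfl, rfl⟩) | (⟨rfl, rfl⟩ | ⟨rfl, rfl⟩) |
        (⟨rfl, rfl⟩ | ⟨rfl, rfl⟩) | (⟨rfl, rfl⟩ | ⟨rfl, rfl⟩) <;>
        simp [cfun, hvu, hau2, hav2, hbu2, hbv2, hba, hx1u2, hx1v, hx1a, hx1b,
          hx2u2, hx2v, hx2a, hx2b, hx21, hx3u2, hx3v', hx3a, hx3b, hx31, hx32]
  · -- uniqueness
    rintro c' ⟨hmem, hprop⟩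
    have hu := hmem u; have hv := hmem v; have ha := hmem a; have hb := hmem b
    have h1 := hmem x1; have h2 := hmem x2; have h3 := hmem x3
    simp [Lfun, hvu, hau2, hav2, hbu2, hbv2, hba, hx1u2, hx1v, hx1a, hx1b,
      hx2u2, hx2v, hx2a, hx2b, hx21, hx3u2, hx3v', hx3a, hx3b, hx31, hx32]
      at hu hv ha hb h1 h2 h3
    have e1 : c' u ≠ c' a := hprop hua
    have e2 : c' a ≠ c' v := hprop hav
    have e3 : c' u ≠ c' b := hprop hub
    have e4 : c' b ≠ c' v := hprop hbv
    have e5 : c' u ≠ c' x1 := hprop hux1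
    have e6 : c' x1 ≠ c' x2 := hprop hx12
    have e7 : c' x2 ≠ c' x3 := hprop hx23
    have e8 : c' x3 ≠ c' v := hprop hx3v
    have key : c' u = 1 ∧ c' v = 3 ∧ c' a = 2 ∧ c' b = 2 ∧ c' x1 = 2 ∧ c' x2 = 3 ∧
        c' x3 = 1 := by
      rcases hu with hu | hu <;> rcases hv with hv | hv <;> rcases ha with ha | ha <;>
        rcases hb with hb | hb <;> rcases h1 with h1 | h1 <;> rcases h2 with h2 | h2 <;>
        rcases h3 with h3 | h3 <;> omega
    obtain ⟨k1, k2, k3, k4, k5, k6, k7⟩ := key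
    funext w
    rcases cov w with rfl | rfl | rfl | rfl | rfl | rfl | rfl <;>
      simp [cfun, hvu, hau2, hav2, hbu2, hbv2, hba, hx1u2, hx1v, hx1a, hx1b,
        hx2u2, hx2v, hx2a, hx2b, hx21, hx3u2, hx3v', hx3a, hx3b, hx31, hx32,
        k1, k2, k3, k4, k5, k6, k7]
end

section
/- If G is a complete tripartite graph that is uniquely k-list colorable (k ≥ 3), and L is a (k,t)-list assignment to G inducing a unique list coloring, then the colors assigned by the unique coloring to the vertices of each part of G include at least k−1 distinct colors; consequently t ≥ 3(k−1). -/
open SimpleGraph Finset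

variable {V : Type*}

/-- In a uniquely `k`-list colorable complete tripartite graph
(`k ≥ 3`), for any `(k,t)`-list assignment with a unique list coloring `c`,
each part receives at least `k-1` distinct colors under `c`; hence
`t ≥ 3(k-1)`. -/
theorem stmt12 [Fintype V] (G : SimpleGraph V) (P : V → Fin 3)
    (hP : ∀ a b, G.Adj a b ↔ P a ≠ P b) (hparts : ∀ i, ∃ v, P v = i)
    (k t : ℕ) (hk : 3 ≤ k) (hG : UniqK G k)
    (L : V → Finset ℕ) (hL : ∀ v, (L v).card = k)
    (ht : (Finset.univ.biUnion L).card = t)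
    (c : V → ℕ) (hc : IsLC G L c) (huniq : ∀ c', IsLC G L c' → c' = c) :
    (∀ i, k - 1 ≤ ((Finset.univ.filter (fun v => P v = i)).image c).card) ∧
      3 * (k - 1) ≤ t := by
  classical
  set S : Fin 3 → Finset ℕ :=
    fun i => (Finset.univ.filter (fun v => P v = i)).image c with hS
  have hmemS : ∀ v, c v ∈ S (P v) := by
    intro v
    exact Finset.mem_image.mpr ⟨v, Finset.mem_filter.mpr ⟨Finset.mem_univ v, rfl⟩, rfl⟩
  have hSmem : ∀ i x, x ∈ S i → ∃ v, P v = i ∧ c v = x := by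
    intro i x hx
    obtain ⟨v, hv, rfl⟩ := Finset.mem_image.mp hx
    exact ⟨v, (Finset.mem_filter.mp hv).2, rfl⟩
  have hdisj : ∀ p q : Fin 3, p ≠ q → ∀ x, x ∈ S p → x ∈ S q → False := by
    intro p q hpq x hxp hxq
    obtain ⟨u, hu, hcu⟩ := hSmem p x hxp
    obtain ⟨w, hw, hcw⟩ := hSmem q x hxq
    have hadj : G.Adj u w := (hP u w).mpr (by rw [hu, hw]; exact hpq)
    exact hc.2 hadj (hcu.trans hcw.symm)
  have fin3 : ∀ x y z w : Fin 3, x ≠ y → z ≠ x → z ≠ y → w ≠ x → w ≠ y → z = w := by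
    decide
  -- key single-vertex recoloring lemma
  have hkey : ∀ v d, d ∈ L v → d ≠ c v → ∃ u, G.Adj v u ∧ c u = d := by
    intro v d hd hdc
    by_contra h
    push_neg at h
    have hlc : IsLC G L (Function.update c v d) := by
      constructor
      · intro w
        rcases eq_or_ne w v with rfl | hw
        · simpa using hd
        · simpa [Function.update_of_ne hw] using hc.1 w
      · intro a b hab
        rcases eq_or_ne a v with rfl | ha
        · have hb : b ≠ a := fun h' => (G.ne_of_adj hab) h'.symm
          rw [Function.update_self, Function.update_of_ne hb]
          exact (h b hab).symm
        · rcases eq_or_ne b v with rfl | hb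
          · rw [Function.update_self, Function.update_of_ne ha]
            exact h a hab.symm
          · rw [Function.update_of_ne ha, Function.update_of_ne hb]
            exact hc.2 hab
    have heq := huniq _ hlc
    have : Function.update c v d v = c v := by rw [heq]
    rw [Function.update_self] at this
    exact hdc this
  have hmain : ∀ i, k - 1 ≤ (S i).card := by
    intro i
    by_contra hlt
    push_neg at hlt
    have hne : ∀ v, P v ≠ i → ∃ d ∈ L v, d ∉ insert (c v) (S i) := by
      intro v _
      apply Finset.not_subset.mp
      intro hsub
      have h1 : (L v).card ≤ (insert (c v) (S i)).card := Finset.card_le_card hsub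
      have h2 : (insert (c v) (S i)).card ≤ (S i).card + 1 := Finset.card_insert_le _ _
      rw [hL v] at h1
      omega
    choose dd hdd1 hdd2 using hne
    set c' : V → ℕ := fun v => if h : P v = i then c v else dd v h with hc'
    have hthird : ∀ v (h : P v ≠ i), ∀ q : Fin 3, q ≠ i → q ≠ P v → dd v h ∈ S q := by
      intro v h q hqi hqv
      have hd2 := hdd2 v h
      rw [Finset.mem_insert, not_or] at hd2
      obtain ⟨u, hadj, hcu⟩ := hkey v (dd v h) (hdd1 v h) hd2.1
      have hPu : P u ≠ P v := fun he => ((hP v u).mp hadj) he.symm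
      have hPui : P u ≠ i := by
        intro he
        apply hd2.2
        have := hmemS u
        rw [hcu, he] at this
        exact this
      have hpq : P u = q := fin3 i (P v) (P u) q (Ne.symm h) hPui hPu hqi hqv
      have := hmemS u
      rw [hcu, hpq] at this
      exact this
    have hlc' : IsLC G L c' := by
      constructor
      · intro v
        by_cases h : P v = i
        · simp only [hc', dif_pos h]
          exact hc.1 v
        · simp only [hc', dif_neg h]
          exact hdd1 v h
      · intro a b hab
        have hne' : P a ≠ P b := (hP a b).mp hab
        by_cases ha : P a = i
        · have hb : P b ≠ i := by rw [ha] at hne'; exact fun e => hne' e.symm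
          simp only [hc', dif_pos ha, dif_neg hb]
          intro he
          have h2 := hdd2 b hb
          rw [Finset.mem_insert, not_or] at h2
          apply h2.2
          have := hmemS a
          rw [ha] at this
          rw [he] at this
          exact this
        · by_cases hb : P b = i
          · have h2 := hdd2 a ha
            rw [Finset.mem_insert, not_or] at h2
            simp only [hc', dif_neg ha, dif_pos hb]
            intro he
            apply h2.2
            have := hmemS b
            rw [hb] at this
            rw [← he] at this
            exact this
          · have h1 := hthird a ha (P b) hb (Ne.symm hne')
            have h2 := hthird b hb (P a) ha hne'
            simp only [hc', dif_neg ha, dif_neg hb]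
            intro he
            rw [he] at h1
            exact hdisj (P b) (P a) (Ne.symm hne') _ h1 h2
    have heq := huniq c' hlc'
    obtain ⟨j, hj⟩ := exists_ne i
    obtain ⟨v, hv⟩ := hparts j
    have hvi : P v ≠ i := by rw [hv]; exact hj
    have h2 := hdd2 v hvi
    rw [Finset.mem_insert, not_or] at h2
    apply h2.1
    have : c' v = c v := by rw [heq]
    rw [hc'] at this
    simp only [dif_neg hvi] at this
    exact this
  refine ⟨hmain, ?_⟩
  have hSsub : ∀ i, S i ⊆ Finset.univ.biUnion L := by
    intro i x hx
    obtain ⟨v, _, rfl⟩ := hSmem i x hx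
    exact Finset.mem_biUnion.mpr ⟨v, Finset.mem_univ v, hc.1 v⟩
  have hd01 : Disjoint (S 0) (S 1) :=
    Finset.disjoint_left.mpr (fun {x} h0 h1 => hdisj 0 1 (by decide) x h0 h1)
  have hd2 : Disjoint (S 0 ∪ S 1) (S 2) := by
    rw [Finset.disjoint_union_left]
    exact ⟨Finset.disjoint_left.mpr (fun {x} h0 h1 => hdisj 0 2 (by decide) x h0 h1),
      Finset.disjoint_left.mpr (fun {x} h0 h1 => hdisj 1 2 (by decide) x h0 h1)⟩
  have hsub : S 0 ∪ S 1 ∪ S 2 ⊆ Finset.univ.biUnion L := by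
    intro x hx
    rcases Finset.mem_union.mp hx with hx | hx
    · rcases Finset.mem_union.mp hx with hx | hx
      · exact hSsub 0 hx
      · exact hSsub 1 hx
    · exact hSsub 2 hx
  have hcard : (S 0 ∪ S 1 ∪ S 2).card = (S 0).card + (S 1).card + (S 2).card := by
    rw [Finset.card_union_of_disjoint hd2, Finset.card_union_of_disjoint hd01]
  have hle := Finset.card_le_card hsub
  have h0 := hmain 0
  have h1 := hmain 1
  have h2 := hmain 2
  rw [ht] at hle
  omega
end

section
/- In a 2-connected graph that contains a triangle and is not complete, there exists an induced subgraph isomorphic to θ_{1,2,r} for some r ≥ 2, that is, three internally disjoint paths of lengths 1, 2, r between two vertices. -/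
open SimpleGraph Finset

variable {V : Type*}

section ThetaHelpers

variable {G : SimpleGraph V}

namespace SimpleGraph.Walk

/-- Transfer a walk of `G` whose support lies in `s` to a walk of `G.induce s`. -/
def toInduce {s : Set V} : ∀ {u v : V} (p : G.Walk u v) (hp : ∀ x ∈ p.support, x ∈ s),
    (G.induce s).Walk ⟨u, hp u p.start_mem_support⟩ ⟨v, hp v p.end_mem_support⟩
  | _, _, nil, _ => nil
  | _, _, cons h p, hp =>
    cons (show (G.induce s).Adj ⟨_, _⟩ ⟨_, _⟩ from h) (p.toInduce fun x hx => hp x (by simp [hx]))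

@[simp] lemma toInduce_support {s : Set V} {u v : V} (p : G.Walk u v)
    (hp : ∀ x ∈ p.support, x ∈ s) :
    (p.toInduce hp).support.map Subtype.val = p.support := by
  induction p with
  | nil => simp [toInduce]
  | cons h p ih => simp [toInduce, ih]

@[simp] lemma toInduce_length {s : Set V} {u v : V} (p : G.Walk u v)
    (hp : ∀ x ∈ p.support, x ∈ s) :
    (p.toInduce hp).length = p.length := by
  induction p with
  | nil => simp [toInduce]
  | cons h p ih => simp [toInduce, ih]

@[simp] lemma toInduce_edges {s : Set V} {u v : V} (p : G.Walk u v)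
    (hp : ∀ x ∈ p.support, x ∈ s) :
    (p.toInduce hp).edges.map (Sym2.map Subtype.val) = p.edges := by
  induction p with
  | nil => simp [toInduce]
  | cons h p ih => simp [toInduce, ih]

lemma toInduce_isPath {s : Set V} {u v : V} (p : G.Walk u v) (hp : ∀ x ∈ p.support, x ∈ s)
    (h : p.IsPath) : (p.toInduce hp).IsPath := by
  rw [isPath_def]
  have := h.support_nodup
  rw [← toInduce_support p hp] at this
  exact this.of_map _

lemma mem_toInduce_support {s : Set V} {u v : V} (p : G.Walk u v)
    (hp : ∀ x ∈ p.support, x ∈ s) (z : s) :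
    z ∈ (p.toInduce hp).support ↔ (z : V) ∈ p.support := by
  rw [← toInduce_support p hp, List.mem_map]
  constructor
  · exact fun h => ⟨z, h, rfl⟩
  · rintro ⟨z', hz', hzz⟩
    rwa [Subtype.val_injective hzz] at hz'

lemma mem_toInduce_edges {s : Set V} {u v : V} (p : G.Walk u v)
    (hp : ∀ x ∈ p.support, x ∈ s) (x y : s) :
    s(x, y) ∈ (p.toInduce hp).edges ↔ s((x : V), (y : V)) ∈ p.edges := by
  rw [← toInduce_edges p hp, List.mem_map]
  constructor
  · rintro h
    exact ⟨s(x, y), h, rfl⟩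
  · rintro ⟨e', he', hee⟩
    have : e' = s(x, y) := by
      apply Sym2.map.injective Subtype.val_injective
      simpa using hee
    rwa [this] at he'

end SimpleGraph.Walk

/-- From a triangle `u v w` together with an induced `u`–`v` path avoiding the
neighbourhood of `w`, build an induced theta graph `θ_{1,2,len}`. -/
lemma theta_builder {u v w : V} (huv : G.Adj u v) (huw : G.Adj u w) (hvw : G.Adj v w)
    (P : G.Walk u v) (hP : P.IsPath) (hw : w ∉ P.support)
    (hwP : ∀ x ∈ P.support, x ≠ u → x ≠ v → ¬ G.Adj w x)
    (hchord : ∀ x ∈ P.support, ∀ y ∈ P.support, G.Adj x y →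
      s(x,y) ∈ P.edges ∨ s(x,y) = s(u,v)) :
    ∃ s : Set V, IsTheta (G.induce s) 1 2 P.length := by
  classical
  set s : Set V := insert w {x | x ∈ P.support} with hs
  have hp : ∀ x ∈ P.support, x ∈ s := fun x hx => Or.inr hx
  have hus : u ∈ s := hp u P.start_mem_support
  have hvs : v ∈ s := hp v P.end_mem_support
  have hws : w ∈ s := Or.inl rfl
  refine ⟨s, ⟨u, hus⟩, ⟨v, hvs⟩, ?_⟩
  have hne : u ≠ v := huv.ne
  have hnuw : u ≠ w := huw.ne
  have hnvw : v ≠ w := hvw.ne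
  refine ⟨Walk.cons (show (G.induce s).Adj ⟨u, hus⟩ ⟨v, hvs⟩ from huv) Walk.nil,
    Walk.cons (show (G.induce s).Adj ⟨u, hus⟩ ⟨w, hws⟩ from huw)
      (Walk.cons (show (G.induce s).Adj ⟨w, hws⟩ ⟨v, hvs⟩ from hvw.symm) Walk.nil),
    P.toInduce hp, ?_, ?_, ?_, P.toInduce_isPath hp hP, by simp, by simp, by simp, ?_, ?_, ?_,
    ?_, ?_⟩
  · simp [Subtype.ext_iff, hne]
  · simp [Walk.isPath_def, Subtype.ext_iff, hne, hnuw, hnvw]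
  · simp [Walk.isPath_def, Subtype.ext_iff, hne, hnuw, hnvw, Ne.symm hnvw]
  · intro x h1 _h2
    simp only [Walk.support_cons, Walk.support_nil, List.mem_cons, List.not_mem_nil] at h1
    tauto
  · intro x h1 _h2
    simp only [Walk.support_cons, Walk.support_nil, List.mem_cons, List.not_mem_nil] at h1
    tauto
  · intro x h1 h2
    simp only [Walk.support_cons, Walk.support_nil, List.mem_cons, List.not_mem_nil] at h1
    rcases h1 with rfl | rfl | rfl | h1
    · exact Or.inl rfl
    · exfalso
      rw [Walk.mem_toInduce_support] at h2
      exact hw h2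
    · exact Or.inr rfl
    · tauto
  · intro x
    rcases x with ⟨x, hx | hx⟩
    · subst hx
      right; left
      simp
    · right; right
      rw [Walk.mem_toInduce_support]
      exact hx
  · intro e he
    induction e with
    | _ x y =>
      rw [mem_edgeSet] at he
      have hadj : G.Adj (x : V) (y : V) := he
      rcases x with ⟨x, hxs⟩
      rcases y with ⟨y, hys⟩
      rcases hxs with rfl | hxs
      · rcases hys with rfl | hys
        · exact absurd hadj (G.loopless.irrefl _)
        · have hyuv : y = u ∨ y = v := by
            by_contra hcon
            push_neg at hcon
            exact hwP y hys hcon.1 hcon.2 hadj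
          right; left
          simp only [Walk.edges_cons, Walk.edges_nil, List.mem_cons, List.not_mem_nil, or_false,
            Sym2.eq, Sym2.rel_iff', Prod.mk.injEq, Prod.swap_prod_mk, Subtype.ext_iff]
          tauto
      · rcases hys with rfl | hys
        · have hxuv : x = u ∨ x = v := by
            by_contra hcon
            push_neg at hcon
            exact hwP x hxs hcon.1 hcon.2 hadj.symm
          right; left
          simp only [Walk.edges_cons, Walk.edges_nil, List.mem_cons, List.not_mem_nil, or_false,
            Sym2.eq, Sym2.rel_iff', Prod.mk.injEq, Prod.swap_prod_mk, Subtype.ext_iff]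
          tauto
        · rcases hchord x hxs y hys hadj with hc | hc
          · right; right
            rw [Walk.mem_toInduce_edges]
            exact hc
          · left
            rw [Sym2.eq, Sym2.rel_iff'] at hc
            simp only [Walk.edges_cons, Walk.edges_nil, List.mem_cons, List.not_mem_nil, or_false,
              Sym2.eq, Sym2.rel_iff', Prod.mk.injEq, Prod.swap_prod_mk, Subtype.ext_iff]
            simp only [Prod.mk.injEq, Prod.swap_prod_mk] at hc
            tauto

lemma edge_of_length_one {x y : V} (p : G.Walk x y) (h : p.length = 1) :
    G.Adj x y ∧ s(x, y) ∈ p.edges := by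
  cases p with
  | nil => simp at h
  | cons h' p' =>
    simp only [Walk.length_cons, Nat.add_eq_right] at h
    have := p'.eq_of_length_eq_zero h
    subst this
    exact ⟨h', by simp⟩

lemma mem_support_append_eq {u m v : V} {A : G.Walk u m} {B : G.Walk m v}
    (h : (A.append B).IsPath) {y : V} (hA : y ∈ A.support) (hB : y ∈ B.support) : y = m := by
  have hnd := h.support_nodup
  rw [Walk.support_append] at hnd
  have hB' : y = m ∨ y ∈ B.support.tail := by
    rw [Walk.support_eq_cons B] at hB
    rwa [List.mem_cons] at hB
  rcases hB' with h1 | h1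
  · exact h1
  · exact absurd h1 (List.disjoint_of_nodup_append hnd hA)

/-- Key induction: from a suitable induced path hanging off a triangle we obtain an
induced theta graph. -/
lemma lemmaC [DecidableEq V] {a c b' : V} (hab : G.Adj a b') (hac : G.Adj a c)
    (hbc : G.Adj b' c) :
    ∀ (n : ℕ) (x : V) (Q : G.Walk x b'), Q.length ≤ n → Q.IsPath → G.Adj a x → x ≠ b' →
    a ∉ Q.support → c ∉ Q.support →
    (∀ y ∈ Q.support, y ≠ b' → ¬ G.Adj c y) →
    (∀ y ∈ Q.support, ∀ z ∈ Q.support, G.Adj y z → s(y, z) ∈ Q.edges) →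
    ∃ r, 2 ≤ r ∧ ∃ s : Set V, IsTheta (G.induce s) 1 2 r := by
  intro n
  induction n with
  | zero =>
    intro x Q hQl _ _ hxb _ _ _ _
    exact absurd (Q.eq_of_length_eq_zero (Nat.le_zero.mp hQl)) hxb
  | succ n ih =>
    intro x Q hQl hQp hax hxb haQ hcQ hS1 hS2
    by_cases hA : ∃ y ∈ Q.support, y ≠ x ∧ y ≠ b' ∧ G.Adj a y
    · obtain ⟨y, hy, hyx, hyb, hay⟩ := hA
      have hTD : ((Q.takeUntil y hy).append (Q.dropUntil y hy)).IsPath := by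
        rw [Q.take_spec hy]; exact hQp
      have hlsplit : (Q.takeUntil y hy).length + (Q.dropUntil y hy).length = Q.length := by
        have := congrArg Walk.length (Q.take_spec hy)
        rwa [Walk.length_append] at this
      have hT1 : 1 ≤ (Q.takeUntil y hy).length := by
        rcases Nat.eq_zero_or_pos (Q.takeUntil y hy).length with h0 | h0
        · exact absurd ((Q.takeUntil y hy).eq_of_length_eq_zero h0).symm hyx
        · exact h0
      refine ih y (Q.dropUntil y hy) (by omega) (hQp.dropUntil hy) hay hyb
        (fun h => haQ (Q.support_dropUntil_subset hy h))
        (fun h => hcQ (Q.support_dropUntil_subset hy h))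
        (fun z hz hzb => hS1 z (Q.support_dropUntil_subset hy hz) hzb) ?_
      intro y' hy' z' hz' hadj
      have hmem := hS2 y' (Q.support_dropUntil_subset hy hy') z'
        (Q.support_dropUntil_subset hy hz') hadj
      rw [← Q.take_spec hy, Walk.edges_append, List.mem_append] at hmem
      rcases hmem with hmem | hmem
      · exfalso
        have h1 : y' ∈ (Q.takeUntil y hy).support :=
          (Q.takeUntil y hy).fst_mem_support_of_mem_edges hmem
        have h2 : z' ∈ (Q.takeUntil y hy).support :=
          (Q.takeUntil y hy).snd_mem_support_of_mem_edges hmem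
        have e1 : y' = y := mem_support_append_eq hTD h1 hy'
        have e2 : z' = y := mem_support_append_eq hTD h2 hz'
        rw [e1, e2] at hadj
        exact G.loopless.irrefl _ hadj
      · exact hmem
    · push_neg at hA
      have hQ1 : 1 ≤ Q.length := by
        rcases Nat.eq_zero_or_pos Q.length with h0 | h0
        · exact absurd (Q.eq_of_length_eq_zero h0) hxb
        · exact h0
      have hca : c ≠ a := hac.ne'
      have hRpath : (Walk.cons hax Q).IsPath := hQp.cons haQ
      have hcR : c ∉ (Walk.cons hax Q).support := by
        rw [Walk.support_cons]
        simp only [List.mem_cons]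
        rintro (rfl | h)
        · exact hca rfl
        · exact hcQ h
      have hwP : ∀ z ∈ (Walk.cons hax Q).support, z ≠ a → z ≠ b' → ¬ G.Adj c z := by
        intro z hz hza hzb
        rw [Walk.support_cons, List.mem_cons] at hz
        rcases hz with rfl | hz
        · exact absurd rfl hza
        · exact hS1 z hz hzb
      have hchord : ∀ y ∈ (Walk.cons hax Q).support, ∀ z ∈ (Walk.cons hax Q).support,
          G.Adj y z → s(y,z) ∈ (Walk.cons hax Q).edges ∨ s(y,z) = s(a,b') := by
        intro y hy z hz hadj
        rw [Walk.support_cons, List.mem_cons] at hy hz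
        rcases hy with rfl | hy
        · rcases hz with rfl | hz
          · exact absurd hadj (G.loopless.irrefl _)
          · have hz' : z = x ∨ z = b' := by
              by_contra hcon
              push_neg at hcon
              exact hA z hz hcon.1 hcon.2 hadj
            rcases hz' with rfl | rfl
            · left; rw [Walk.edges_cons]; exact List.mem_cons_self
            · right; rfl
        · rcases hz with rfl | hz
          · have hy' : y = x ∨ y = b' := by
              by_contra hcon
              push_neg at hcon
              exact hA y hy hcon.1 hcon.2 hadj.symm
            rcases hy' with rfl | rfl
            · left
              rw [Walk.edges_cons, Sym2.eq_swap]
              exact List.mem_cons_self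
            · right; rw [Sym2.eq_swap]
          · left
            rw [Walk.edges_cons]
            exact List.mem_cons_of_mem _ (hS2 y hy z hz hadj)
      obtain ⟨s, hs⟩ := theta_builder hab hac hbc (Walk.cons hax Q) hRpath hcR hwP hchord
      exact ⟨(Walk.cons hax Q).length, by rw [Walk.length_cons]; omega, s, hs⟩

end ThetaHelpers

/-- A 2-connected non-complete graph containing a triangle has an
induced subgraph isomorphic to `θ_{1,2,r}` for some `r ≥ 2`. -/
theorem stmt14 [Fintype V] (G : SimpleGraph V) (h2 : TwoConn G)
    (htri : ∃ a b c, G.Adj a b ∧ G.Adj b c ∧ G.Adj a c) (hnc : G ≠ ⊤) :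
    ∃ r, 2 ≤ r ∧ ∃ s : Set V, IsTheta (G.induce s) 1 2 r := by
  classical
  obtain ⟨a0, b0, c0, hab0, hbc0, hac0⟩ := htri
  set CL : Finset (Finset V) := Finset.univ.filter (fun K : Finset V => G.IsClique (K : Set V))
    with hCL
  have htri_cl : ({a0, b0, c0} : Finset V) ∈ CL := by
    rw [hCL, Finset.mem_filter]
    refine ⟨Finset.mem_univ _, ?_⟩
    intro p hp q hq hne
    simp only [Finset.coe_insert, Set.mem_insert_iff, Finset.coe_singleton,
      Set.mem_singleton_iff] at hp hq
    rcases hp with rfl | rfl | rfl <;> rcases hq with rfl | rfl | rfl <;>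
      first
        | exact absurd rfl hne
        | assumption
        | exact hab0.symm
        | exact hbc0.symm
        | exact hac0.symm
  obtain ⟨K, hKCL, hKmax⟩ := Finset.exists_max_image CL Finset.card ⟨_, htri_cl⟩
  have hKcl : G.IsClique (K : Set V) := (Finset.mem_filter.mp hKCL).2
  have hK3 : 3 ≤ K.card := by
    have h1 := hKmax _ htri_cl
    have hcard : ({a0, b0, c0} : Finset V).card = 3 := by
      rw [Finset.card_insert_of_notMem (by simp [hab0.ne, hac0.ne]),
        Finset.card_insert_of_notMem (by simp [hbc0.ne]), Finset.card_singleton]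
    omega
  have hKadj : ∀ x ∈ K, ∀ y ∈ K, x ≠ y → G.Adj x y := fun x hx y hy hne =>
    hKcl (Finset.mem_coe.mpr hx) (Finset.mem_coe.mpr hy) hne
  have hmaxadj : ∀ x ∉ K, ∃ w ∈ K, ¬ G.Adj x w := by
    intro x hxK
    by_contra hcon
    push_neg at hcon
    have hcl : G.IsClique ((insert x K : Finset V) : Set V) := by
      intro p hp q hq hne
      simp only [Finset.coe_insert, Set.mem_insert_iff, Finset.mem_coe] at hp hq
      rcases hp with rfl | hp
      · rcases hq with rfl | hq
        · exact absurd rfl hne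
        · exact hcon q hq
      · rcases hq with rfl | hq
        · exact (hcon p hp).symm
        · exact hKadj p hp q hq hne
    have hmem : insert x K ∈ CL := by
      rw [hCL, Finset.mem_filter]
      exact ⟨Finset.mem_univ _, hcl⟩
    have h1 := hKmax _ hmem
    rw [Finset.card_insert_of_notMem hxK] at h1
    omega
  obtain ⟨v0, hv0⟩ : ∃ v0, v0 ∉ K := by
    by_contra hcon
    push_neg at hcon
    apply hnc
    ext x y
    simp only [top_adj]
    constructor
    · exact Adj.ne
    · intro hxy
      exact hKadj x (hcon x) y (hcon y) hxy
  obtain ⟨a1, ha1⟩ := Finset.card_pos.mp (by omega : 0 < K.card)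
  obtain ⟨W0⟩ := h2.2.1.preconnected v0 a1
  obtain ⟨dt, _hdt, hdt1, hdt2⟩ := W0.exists_boundary_dart {x | x ∉ K} hv0 (by simp [ha1])
  have hda : G.Adj dt.fst dt.snd := dt.adj
  have hdK : dt.fst ∉ K := hdt1
  have haK : dt.snd ∈ K := not_not.mp hdt2
  set d := dt.fst
  set a := dt.snd
  by_cases hc2 : ∀ x, x ∉ K → ∀ y ∈ K, ∀ z ∈ K, G.Adj x y → G.Adj x z → y = z
  · -- every vertex outside K has at most one neighbour in K
    have hda' : d ≠ a := hda.ne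
    obtain ⟨b1, hb1K, hb1a⟩ : ∃ b1 ∈ K, b1 ≠ a := by
      by_contra hcon
      push_neg at hcon
      have hsub : K ⊆ {a} := fun t ht => Finset.mem_singleton.mpr (hcon t ht)
      have h1 := Finset.card_le_card hsub
      simp only [Finset.card_singleton] at h1
      omega
    have hconn := h2.2.2 a
    have hdv : d ∈ ((⊤ : G.Subgraph).deleteVerts {a}).verts := by
      simp only [SimpleGraph.Subgraph.deleteVerts_verts, SimpleGraph.Subgraph.verts_top,
        Set.mem_diff, Set.mem_univ, Set.mem_singleton_iff, true_and]
      exact hda'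
    have hb1v : b1 ∈ ((⊤ : G.Subgraph).deleteVerts {a}).verts := by
      simp only [SimpleGraph.Subgraph.deleteVerts_verts, SimpleGraph.Subgraph.verts_top,
        Set.mem_diff, Set.mem_univ, Set.mem_singleton_iff, true_and]
      exact hb1a
    obtain ⟨q1⟩ := hconn.preconnected ⟨d, hdv⟩ ⟨b1, hb1v⟩
    have hq2 : ∃ p : G.Walk d b1, a ∉ p.support := by
      refine ⟨q1.map (SimpleGraph.Subgraph.hom _), ?_⟩
      intro hmem
      replace hmem : a ∈ (q1.map (SimpleGraph.Subgraph.hom _)).support := hmem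
      rw [Walk.support_map] at hmem
      rw [List.mem_map] at hmem
      obtain ⟨z, _, hz2⟩ := hmem
      have hz3 := z.2
      simp only [SimpleGraph.Subgraph.deleteVerts_verts, SimpleGraph.Subgraph.verts_top,
        Set.mem_diff, Set.mem_univ, Set.mem_singleton_iff, true_and] at hz3
      exact hz3 hz2
    obtain ⟨q2, haq2⟩ := hq2
    have hSne : {n | ∃ b'', b'' ∈ K ∧ b'' ≠ a ∧
        ∃ p : G.Walk d b'', a ∉ p.support ∧ p.length = n}.Nonempty :=
      ⟨q2.length, b1, hb1K, hb1a, q2, haq2, rfl⟩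
    obtain ⟨b', hbK, hba, q0, haq0, hq0len⟩ := Nat.sInf_mem hSne
    set P : G.Walk d b' := q0.bypass with hPdef
    have haP : a ∉ P.support := fun h => haq0 (q0.support_bypass_subset h)
    have hPpath : P.IsPath := q0.bypass_isPath
    have hPlen : P.length = sInf {n | ∃ b'', b'' ∈ K ∧ b'' ≠ a ∧
        ∃ p : G.Walk d b'', a ∉ p.support ∧ p.length = n} := by
      refine le_antisymm ?_ (Nat.sInf_le ⟨b', hbK, hba, P, haP, rfl⟩)
      rw [← hq0len]
      exact q0.length_bypass_le
    have hmin : ∀ b'' ∈ K, b'' ≠ a → ∀ p : G.Walk d b'', a ∉ p.support →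
        P.length ≤ p.length := by
      intro b'' hb hban p hap
      rw [hPlen]
      exact Nat.sInf_le ⟨b'', hb, hban, p, hap, rfl⟩
    have hdb' : d ≠ b' := fun h => hdK (h ▸ hbK)
    have hsplitP : ∀ (x) (hx : x ∈ P.support),
        (P.takeUntil x hx).length + (P.dropUntil x hx).length = P.length := by
      intro x hx
      have := congrArg Walk.length (P.take_spec hx)
      rwa [Walk.length_append] at this
    have hdrop1 : ∀ (x) (hx : x ∈ P.support), x ≠ b' → 1 ≤ (P.dropUntil x hx).length := by
      intro x hx hxb
      rcases Nat.eq_zero_or_pos (P.dropUntil x hx).length with h0 | h0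
      · exact absurd ((P.dropUntil x hx).eq_of_length_eq_zero h0) hxb
      · exact h0
    have hF1 : ∀ (x) (hx : x ∈ P.support), x ≠ b' → x ∉ K := by
      intro x hx hxb hxK
      have hxa : x ≠ a := fun h => haP (h ▸ hx)
      have h1 := hmin x hxK hxa (P.takeUntil x hx)
        (fun h => haP (P.support_takeUntil_subset hx h))
      have h2 := hsplitP x hx
      have h3 := hdrop1 x hx hxb
      omega
    have hF3 : ∀ (x) (hx : x ∈ P.support), x ≠ b' → ∀ c', c' ∈ K → c' ≠ a → c' ≠ b' →
        ¬ G.Adj x c' := by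
      intro x hx hxb c' hcK hca hcb hadj
      have haW : a ∉ ((P.takeUntil x hx).concat hadj).support := by
        intro hmem
        rw [Walk.support_concat, List.mem_append] at hmem
        rcases hmem with hmem | hmem
        · exact haP (P.support_takeUntil_subset hx hmem)
        · exact hca (List.mem_singleton.mp hmem).symm
      have h1 := hmin c' hcK hca _ haW
      rw [Walk.length_concat] at h1
      have h2 := hsplitP x hx
      have h3 := hdrop1 x hx hxb
      have hD : (P.dropUntil x hx).length = 1 := by omega
      have hxb' : G.Adj x b' := (edge_of_length_one _ hD).1
      exact hcb (hc2 x (hF1 x hx hxb) b' hbK c' hcK hxb' hadj).symm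
    have hF2 : ∀ (x) (hx : x ∈ P.support) (y) (hy : y ∈ P.support), G.Adj x y →
        s(x, y) ∈ P.edges := by
      intro x hx y hy hadj
      have hy2 : y ∈ (P.takeUntil x hx).support ∨ y ∈ (P.dropUntil x hx).support := by
        rw [← Walk.mem_support_append_iff, P.take_spec hx]
        exact hy
      rcases hy2 with hyT | hyD
      · have haW : a ∉ (((P.takeUntil x hx).takeUntil y hyT).append
            (Walk.cons hadj.symm (P.dropUntil x hx))).support := by
          intro hmem
          rcases (Walk.mem_support_append_iff _ _).mp hmem with hmem | hmem
          · exact haP (P.support_takeUntil_subset hx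
              ((P.takeUntil x hx).support_takeUntil_subset hyT hmem))
          · rw [Walk.support_cons, List.mem_cons] at hmem
            rcases hmem with hmem | hmem
            · exact haP (by rw [hmem]; exact hy)
            · exact haP (P.support_dropUntil_subset hx hmem)
        have h1 := hmin b' hbK hba _ haW
        rw [Walk.length_append, Walk.length_cons] at h1
        have h2 := hsplitP x hx
        have h3 : ((P.takeUntil x hx).takeUntil y hyT).length +
            ((P.takeUntil x hx).dropUntil y hyT).length = (P.takeUntil x hx).length := by
          have := congrArg Walk.length ((P.takeUntil x hx).take_spec hyT)
          rwa [Walk.length_append] at this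
        have h5 : 1 ≤ ((P.takeUntil x hx).dropUntil y hyT).length := by
          rcases Nat.eq_zero_or_pos ((P.takeUntil x hx).dropUntil y hyT).length with h0 | h0
          · exfalso
            have := ((P.takeUntil x hx).dropUntil y hyT).eq_of_length_eq_zero h0
            rw [this] at hadj
            exact G.loopless.irrefl _ hadj
          · exact h0
        have h4 : ((P.takeUntil x hx).dropUntil y hyT).length = 1 := by omega
        have hedge := (edge_of_length_one _ h4).2
        have hPe : s(y, x) ∈ P.edges := P.edges_takeUntil_subset hx
          ((P.takeUntil x hx).edges_dropUntil_subset hyT hedge)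
        rwa [Sym2.eq_swap] at hPe
      · have haW : a ∉ ((P.takeUntil x hx).append
            (Walk.cons hadj ((P.dropUntil x hx).dropUntil y hyD))).support := by
          intro hmem
          rcases (Walk.mem_support_append_iff _ _).mp hmem with hmem | hmem
          · exact haP (P.support_takeUntil_subset hx hmem)
          · rw [Walk.support_cons, List.mem_cons] at hmem
            rcases hmem with hmem | hmem
            · exact haP (by rw [hmem]; exact hx)
            · exact haP (P.support_dropUntil_subset hx
                ((P.dropUntil x hx).support_dropUntil_subset hyD hmem))
        have h1 := hmin b' hbK hba _ haW
        rw [Walk.length_append, Walk.length_cons] at h1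
        have h2 := hsplitP x hx
        have h3 : ((P.dropUntil x hx).takeUntil y hyD).length +
            ((P.dropUntil x hx).dropUntil y hyD).length = (P.dropUntil x hx).length := by
          have := congrArg Walk.length ((P.dropUntil x hx).take_spec hyD)
          rwa [Walk.length_append] at this
        have h5 : 1 ≤ ((P.dropUntil x hx).takeUntil y hyD).length := by
          rcases Nat.eq_zero_or_pos ((P.dropUntil x hx).takeUntil y hyD).length with h0 | h0
          · exfalso
            have := ((P.dropUntil x hx).takeUntil y hyD).eq_of_length_eq_zero h0
            rw [← this] at hadj
            exact G.loopless.irrefl _ hadj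
          · exact h0
        have h4 : ((P.dropUntil x hx).takeUntil y hyD).length = 1 := by omega
        have hedge := (edge_of_length_one _ h4).2
        exact P.edges_dropUntil_subset hx
          ((P.dropUntil x hx).edges_takeUntil_subset hyD hedge)
    obtain ⟨c, hcK, hca, hcb⟩ : ∃ c ∈ K, c ≠ a ∧ c ≠ b' := by
      by_contra hcon
      push_neg at hcon
      have hsub : K ⊆ {a, b'} := by
        intro t ht
        by_cases hta : t = a
        · simp [hta]
        · simp [hcon t ht hta]
      have h1 := Finset.card_le_card hsub
      have h2 : ({a, b'} : Finset V).card ≤ 2 := by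
        apply le_trans (Finset.card_insert_le _ _)
        simp
      omega
    have hab' : G.Adj a b' := hKadj a haK b' hbK (fun h => hba h.symm)
    have hacadj : G.Adj a c := hKadj a haK c hcK (fun h => hca h.symm)
    have hbcadj : G.Adj b' c := hKadj b' hbK c hcK (fun h => hcb h.symm)
    have hcP : c ∉ P.support := by
      intro hc
      by_cases hcb' : c = b'
      · exact hcb hcb'
      · exact (hF1 c hc hcb') hcK
    exact lemmaC hab' hacadj hbcadj P.length d P le_rfl hPpath hda.symm hdb' haP hcP
      (fun y hy hyb hadj => hF3 y hy hyb c hcK hca hcb hadj.symm)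
      (fun y hy z hz hadj => hF2 y hy z hz hadj)
  · -- some vertex outside K has two neighbours in K
    push_neg at hc2
    obtain ⟨x, hxK, y, hyK, z, hzK, hxy, hxz, hyz⟩ := hc2
    obtain ⟨w, hwK, hxw⟩ := hmaxadj x hxK
    have hwy : w ≠ y := fun h => hxw (h ▸ hxy)
    have hwz : w ≠ z := fun h => hxw (h ▸ hxz)
    have hyzadj : G.Adj y z := hKadj y hyK z hzK hyz
    have hywadj : G.Adj y w := hKadj y hyK w hwK (Ne.symm hwy)
    have hzwadj : G.Adj z w := hKadj z hzK w hwK (Ne.symm hwz)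
    have hxy' : x ≠ y := fun h => hxK (h ▸ hyK)
    have hxz' : x ≠ z := fun h => hxK (h ▸ hzK)
    have hxw' : x ≠ w := fun h => hxK (h ▸ hwK)
    set P : G.Walk y z := Walk.cons hxy.symm (Walk.cons hxz Walk.nil) with hPdef
    have hPsup : P.support = [y, x, z] := by simp [hPdef]
    have hPpath : P.IsPath := by
      rw [Walk.isPath_def, hPsup]
      simp [Ne.symm hxy', hyz, hxz']
    have hwsup : w ∉ P.support := by
      rw [hPsup]
      simp only [List.mem_cons, List.not_mem_nil, or_false]
      push_neg
      exact ⟨hwy, Ne.symm hxw', hwz⟩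
    have hwP : ∀ t ∈ P.support, t ≠ y → t ≠ z → ¬ G.Adj w t := by
      intro t ht hty htz
      rw [hPsup] at ht
      simp only [List.mem_cons, List.not_mem_nil, or_false] at ht
      rcases ht with rfl | rfl | rfl
      · exact absurd rfl hty
      · exact fun h => hxw h.symm
      · exact absurd rfl htz
    have hPedges : P.edges = [s(y, x), s(x, z)] := by simp [hPdef]
    have hchord : ∀ t ∈ P.support, ∀ t' ∈ P.support, G.Adj t t' →
        s(t, t') ∈ P.edges ∨ s(t, t') = s(y, z) := by
      intro t ht t' ht' hadj
      rw [hPsup] at ht ht'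
      simp only [List.mem_cons, List.not_mem_nil, or_false] at ht ht'
      rw [hPedges]
      rcases ht with rfl | rfl | rfl <;> rcases ht' with rfl | rfl | rfl <;>
        first
          | exact absurd hadj (G.loopless.irrefl _)
          | (right; first | rfl | exact Sym2.eq_swap)
          | (left; simp only [List.mem_cons, List.not_mem_nil, or_false, Sym2.eq, Sym2.rel_iff',
              Prod.mk.injEq, Prod.swap_prod_mk]; tauto)
    obtain ⟨s, hs⟩ := theta_builder hyzadj hywadj hzwadj P hPpath hwsup hwP hchord
    refine ⟨P.length, by simp [hPdef], s, hs⟩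
end
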